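/- arXiv:2111.15161 — 6 statements merged into one kernel-verified Lean document; each statement's English description precedes it below -/
import Mathlib

section
/- (Subword Condition) Let u, v ∈ S_{n+1} be permutations agreeing except at positions i_1 < i_2 < ... < i_m. Let u' (resp. v') be the permutations of the m-element set {u(i_j) : 1 ≤ j ≤ m} (with its induced total order) determined in one-line notation by (u(i_1),...,u(i_m)) (resp. (v(i_1),...,v(i_m))). Then u ≤ v in Bruhat order on S_{n+1} if and only if u' ≤ v' in Bruhat order on S_m. -/
open Polynomial

/-- Number of inversions (the Coxeter length) of a permutation of `Fin n`. -/
def invCount {n : ℕ} (x : Equiv.Perm (Fin n)) : ℕ :=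
  (Finset.univ.filter (fun p : Fin n × Fin n => p.1 < p.2 ∧ x p.2 < x p.1)).card

/-- Bruhat order on the symmetric group `S_n = Perm (Fin n)`: `x ≤ y` iff there is an
upward path from `x` to `y` in the Bruhat graph (edges: multiplication by a transposition,
oriented by increasing length). -/
def BruhatLE {n : ℕ} (x y : Equiv.Perm (Fin n)) : Prop :=
  Relation.ReflTransGen
    (fun u v => (∃ i j : Fin n, i ≠ j ∧ v = Equiv.swap i j * u) ∧ invCount u < invCount v)
    x y

def BruhatLT {n : ℕ} (x y : Equiv.Perm (Fin n)) : Prop :=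
  BruhatLE x y ∧ x ≠ y

namespace SubwordAux

open Finset Equiv

variable {N : ℕ}


/-- `eM x i j = #{r < i : x r ≥ j}` (rank function of the permutation matrix). -/
def eM (x : Equiv.Perm (Fin N)) (i j : ℕ) : ℕ :=
  (Finset.univ.filter (fun r : Fin N => r.val < i ∧ j ≤ (x r).val)).card

lemma eM_anti (x : Equiv.Perm (Fin N)) (i : ℕ) {j j' : ℕ} (h : j ≤ j') :
    eM x i j' ≤ eM x i j := by
  apply Finset.card_le_card
  intro r hr
  simp only [Finset.mem_filter, Finset.mem_univ, true_and] at hr ⊢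
  omega

/-- Split `eM x i j` at an intermediate position `pp ≤ i`. -/
lemma eM_split (x : Equiv.Perm (Fin N)) {pp i : ℕ} (h : pp ≤ i) (j : ℕ) :
    eM x i j = eM x pp j +
      (Finset.univ.filter (fun r : Fin N => pp ≤ r.val ∧ r.val < i ∧ j ≤ (x r).val)).card := by
  unfold eM
  rw [← Finset.card_filter_add_card_filter_not (p := fun r : Fin N => r.val < pp),
    Finset.filter_filter, Finset.filter_filter]
  congr 1
  · congr 1; ext r
    simp only [Finset.mem_filter, Finset.mem_univ, true_and]
    omega
  · congr 1; ext r
    simp only [Finset.mem_filter, Finset.mem_univ, true_and, not_lt]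
    omega

lemma eM_succ (x : Equiv.Perm (Fin N)) (p : Fin N) (j : ℕ) :
    eM x (p.val + 1) j = eM x p.val j + (if j ≤ (x p).val then 1 else 0) := by
  rw [eM_split x (Nat.le_succ p.val) j]
  congr 1
  split_ifs with h
  · rw [Finset.card_eq_one]
    refine ⟨p, ?_⟩
    ext r
    simp only [Finset.mem_filter, Finset.mem_univ, true_and, Finset.mem_singleton]
    constructor
    · rintro ⟨h1, h2, _⟩; exact Fin.ext (by omega)
    · rintro rfl; exact ⟨le_refl _, by omega, h⟩
  · rw [Finset.card_eq_zero]
    ext r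
    simp only [Finset.mem_filter, Finset.mem_univ, true_and, Finset.notMem_empty, iff_false]
    rintro ⟨h1, h2, h3⟩
    have : r = p := Fin.ext (by omega)
    subst this; exact h h3

lemma eM_congr_below {x y : Equiv.Perm (Fin N)} {pp : ℕ}
    (h : ∀ r : Fin N, r.val < pp → x r = y r) (j : ℕ) :
    eM x pp j = eM y pp j := by
  unfold eM
  congr 1
  ext r
  simp only [Finset.mem_filter, Finset.mem_univ, true_and]
  constructor <;> rintro ⟨h1, h2⟩ <;> refine ⟨h1, ?_⟩
  · rwa [← h r h1]
  · rwa [h r h1]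


lemma card_filter_eq_sum (P : Fin N → Prop) [DecidablePred P] :
    (Finset.univ.filter P).card = ∑ r : Fin N, (if P r then 1 else 0) := by
  rw [Finset.card_filter]

lemma sum_split_two (f : Fin N → ℕ) (p q : Fin N) (hpq : p ≠ q) :
    ∑ r : Fin N, f r = f p + (f q + ∑ r ∈ (Finset.univ.erase p).erase q, f r) := by
  have hqmem : q ∈ (Finset.univ : Finset (Fin N)).erase p :=
    Finset.mem_erase.mpr ⟨fun h => hpq h.symm, Finset.mem_univ q⟩
  rw [Finset.add_sum_erase _ f hqmem, Finset.add_sum_erase _ f (Finset.mem_univ p)]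

/-- Effect on `eM` of multiplying by a transposition `swap a b` with `a < b` whose
positions are in increasing order. -/
lemma eM_swap (x : Equiv.Perm (Fin N)) (a b : Fin N) (hab : a.val < b.val)
    (hpq : (x.symm a).val < (x.symm b).val) (i j : ℕ) :
    eM (Equiv.swap a b * x) i j = eM x i j +
      (if (x.symm a).val < i ∧ i ≤ (x.symm b).val ∧ a.val < j ∧ j ≤ b.val then 1 else 0) := by
  set p := x.symm a with hp
  set q := x.symm b with hq
  have hxp : x p = a := x.apply_symm_apply a
  have hxq : x q = b := x.apply_symm_apply b
  have hpq' : p ≠ q := fun h => by rw [h, hxq] at hxp; omega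
  set z := Equiv.swap a b * x with hz
  have hzp : z p = b := by simp [hz, hxp, Equiv.swap_apply_left]
  have hzq : z q = a := by simp [hz, hxq, Equiv.swap_apply_right]
  have hzr : ∀ r : Fin N, r ≠ p → r ≠ q → z r = x r := by
    intro r hrp hrq
    have h1 : x r ≠ a := fun h => hrp (x.injective (by rw [h, hxp]))
    have h2 : x r ≠ b := fun h => hrq (x.injective (by rw [h, hxq]))
    simp [hz, Equiv.swap_apply_of_ne_of_ne h1 h2]
  unfold eM
  rw [card_filter_eq_sum, card_filter_eq_sum,
    sum_split_two (fun r : Fin N => if r.val < i ∧ j ≤ ((z r)).val then 1 else 0) p q hpq',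
    sum_split_two (fun r : Fin N => if r.val < i ∧ j ≤ ((x r)).val then 1 else 0) p q hpq']
  have hrest : ∑ r ∈ (Finset.univ.erase p).erase q,
      (if r.val < i ∧ j ≤ ((z r)).val then 1 else 0)
      = ∑ r ∈ (Finset.univ.erase p).erase q,
      (if r.val < i ∧ j ≤ ((x r)).val then 1 else 0) := by
    apply Finset.sum_congr rfl
    intro r hr
    have hr1 : r ≠ q := (Finset.mem_erase.mp hr).1
    have hr2 : r ≠ p := (Finset.mem_erase.mp (Finset.mem_erase.mp hr).2).1
    rw [hzr r hr2 hr1]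
  simp only [hrest, hzp, hzq, hxp, hxq]
  split_ifs <;> omega

/-- `invCount` as a sum of the rank function along the diagonal of the permutation. -/
lemma invCount_eq_sum (x : Equiv.Perm (Fin N)) :
    invCount x = ∑ r : Fin N, eM x r.val ((x r).val + 1) := by
  unfold invCount
  rw [Finset.card_filter, Fintype.sum_prod_type, Finset.sum_comm]
  apply Finset.sum_congr rfl
  intro r _
  simp only [eM]
  rw [Finset.card_filter]
  apply Finset.sum_congr rfl
  intro s _
  have hiff : ((s, r).1 < (s, r).2 ∧ x (s, r).2 < x (s, r).1)
      ↔ (s.val < r.val ∧ (x r).val + 1 ≤ (x s).val) := by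
    simp only [Fin.lt_def]
    omega
  rw [if_congr hiff rfl rfl]

/-- Multiplying by `swap a b` in the "length increasing" orientation strictly
increases the inversion count. -/
lemma invCount_lt_swap (x : Equiv.Perm (Fin N)) (a b : Fin N) (hab : a.val < b.val)
    (hpq : (x.symm a).val < (x.symm b).val) :
    invCount x < invCount (Equiv.swap a b * x) := by
  set p := x.symm a with hp
  set q := x.symm b with hq
  have hxp : x p = a := x.apply_symm_apply a
  have hxq : x q = b := x.apply_symm_apply b
  have hpq' : p ≠ q := fun h => by rw [h, hxq] at hxp; omega
  set z := Equiv.swap a b * x with hz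
  have hzp : z p = b := by simp [hz, hxp, Equiv.swap_apply_left]
  have hzq : z q = a := by simp [hz, hxq, Equiv.swap_apply_right]
  have hzr : ∀ r : Fin N, r ≠ p → r ≠ q → z r = x r := by
    intro r hrp hrq
    have h1 : x r ≠ a := fun h => hrp (x.injective (by rw [h, hxp]))
    have h2 : x r ≠ b := fun h => hrq (x.injective (by rw [h, hxq]))
    simp [hz, Equiv.swap_apply_of_ne_of_ne h1 h2]
  have heswap : ∀ i j : ℕ, eM z i j = eM x i j +
      (if p.val < i ∧ i ≤ q.val ∧ a.val < j ∧ j ≤ b.val then 1 else 0) :=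
    fun i j => eM_swap x a b hab hpq i j
  rw [invCount_eq_sum, invCount_eq_sum,
    sum_split_two (fun r : Fin N => eM z r.val ((z r).val + 1)) p q hpq',
    sum_split_two (fun r : Fin N => eM x r.val ((x r).val + 1)) p q hpq']
  have hrest : ∑ r ∈ (Finset.univ.erase p).erase q, eM x r.val ((x r).val + 1)
      ≤ ∑ r ∈ (Finset.univ.erase p).erase q, eM z r.val ((z r).val + 1) := by
    apply Finset.sum_le_sum
    intro r hr
    have hr1 : r ≠ q := (Finset.mem_erase.mp hr).1
    have hr2 : r ≠ p := (Finset.mem_erase.mp (Finset.mem_erase.mp hr).2).1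
    rw [hzr r hr2 hr1, heswap]
    omega
  -- head terms
  have h1 : eM z p.val ((z p).val + 1) = eM x p.val (b.val + 1) := by
    rw [hzp, heswap]
    rw [if_neg (by omega), Nat.add_zero]
  have h2 : eM z q.val ((z q).val + 1) = eM x q.val (a.val + 1) + 1 := by
    rw [hzq, heswap]
    rw [if_pos (by omega)]
  have h3 : eM x p.val ((x p).val + 1) = eM x p.val (a.val + 1) := by rw [hxp]
  have h4 : eM x q.val ((x q).val + 1) = eM x q.val (b.val + 1) := by rw [hxq]
  have h5 := eM_split x (le_of_lt hpq) (a.val + 1)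
  have h6 := eM_split x (le_of_lt hpq) (b.val + 1)
  have h7 : (Finset.univ.filter
        (fun r : Fin N => p.val ≤ r.val ∧ r.val < q.val ∧ b.val + 1 ≤ (x r).val)).card
      ≤ (Finset.univ.filter
        (fun r : Fin N => p.val ≤ r.val ∧ r.val < q.val ∧ a.val + 1 ≤ (x r).val)).card := by
    apply Finset.card_le_card
    intro r hr
    simp only [Finset.mem_filter, Finset.mem_univ, true_and] at hr ⊢
    omega
  omega

lemma step_mono {x y : Equiv.Perm (Fin N)}
    (h : (∃ a b : Fin N, a ≠ b ∧ y = Equiv.swap a b * x) ∧ invCount x < invCount y) :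
    ∀ i j : ℕ, eM x i j ≤ eM y i j := by
  obtain ⟨⟨a, b, hab, rfl⟩, hlen⟩ := h
  have main : ∀ a b : Fin N, a.val < b.val →
      invCount x < invCount (Equiv.swap a b * x) →
      ∀ i j, eM x i j ≤ eM (Equiv.swap a b * x) i j := by
    intro a b hab' hlen i j
    rcases Nat.lt_trichotomy (x.symm a).val (x.symm b).val with hc | hc | hc
    · rw [eM_swap x a b hab' hc]; omega
    · exfalso
      have h1 : x.symm a = x.symm b := Fin.ext hc
      have := x.symm.injective h1
      omega
    · exfalso
      set z := Equiv.swap a b * x with hzdef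
      have hzz : Equiv.swap a b * z = x := by
        rw [hzdef, ← mul_assoc, Equiv.swap_mul_self, one_mul]
      have hza : z.symm a = x.symm b := by
        rw [Equiv.symm_apply_eq]
        show a = Equiv.swap a b (x (x.symm b))
        rw [x.apply_symm_apply, Equiv.swap_apply_right]
      have hzb : z.symm b = x.symm a := by
        rw [Equiv.symm_apply_eq]
        show b = Equiv.swap a b (x (x.symm a))
        rw [x.apply_symm_apply, Equiv.swap_apply_left]
      have := invCount_lt_swap z a b hab' (by rw [hza, hzb]; exact hc)
      rw [hzz] at this
      omega
  intro i j
  rcases Nat.lt_trichotomy a.val b.val with hc | hc | hc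
  · exact main a b hc hlen i j
  · exact absurd (Fin.ext hc) hab
  · have hcomm : Equiv.swap a b = Equiv.swap b a := Equiv.swap_comm a b
    rw [hcomm] at hlen ⊢
    exact main b a hc hlen i j

lemma bruhatLE_mono {x y : Equiv.Perm (Fin N)} (h : BruhatLE x y) :
    ∀ i j : ℕ, eM x i j ≤ eM y i j := by
  induction h with
  | refl => exact fun i j => le_rfl
  | tail _ h2 ih => exact fun i j => le_trans (ih i j) (step_mono h2 i j)

lemma exists_first_diff {x y : Equiv.Perm (Fin N)} (hxy : x ≠ y)
    (h : ∀ i j, eM x i j ≤ eM y i j) :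
    ∃ p : Fin N, (∀ r : Fin N, r.val < p.val → x r = y r) ∧ (x p).val < (y p).val := by
  set Sd := Finset.univ.filter (fun r : Fin N => x r ≠ y r) with hSd
  have hne : Sd.Nonempty := by
    by_contra hc
    apply hxy
    apply Equiv.ext
    intro r
    by_contra hr
    exact hc ⟨r, Finset.mem_filter.mpr ⟨Finset.mem_univ r, hr⟩⟩
  set p := Finset.min' Sd hne with hpdef
  have hpmem := Finset.min'_mem Sd hne
  have hpx : x p ≠ y p := (Finset.mem_filter.mp (hpmem)).2
  have hbelow : ∀ r : Fin N, r.val < p.val → x r = y r := by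
    intro r hr
    by_contra hc
    have hle := Finset.min'_le Sd r (Finset.mem_filter.mpr ⟨Finset.mem_univ r, hc⟩)
    rw [Fin.le_def] at hle
    omega
  refine ⟨p, hbelow, ?_⟩
  have key : ∀ j : ℕ, (if j ≤ (x p).val then 1 else 0) ≤ (if j ≤ (y p).val then (1:ℕ) else 0) := by
    intro j
    have h1 := h (p.val + 1) j
    rw [eM_succ, eM_succ, eM_congr_below hbelow] at h1
    omega
  have h2 := key ((y p).val + 1)
  have hne2 : (x p).val ≠ (y p).val := fun hh => hpx (Fin.ext hh)
  split_ifs at h2 <;> omega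

lemma exists_step {x y : Equiv.Perm (Fin N)} (hxy : x ≠ y)
    (h : ∀ i j, eM x i j ≤ eM y i j) :
    ∃ z : Equiv.Perm (Fin N),
      ((∃ a b : Fin N, a ≠ b ∧ z = Equiv.swap a b * x) ∧ invCount x < invCount z) ∧
      (∀ i j, eM x i j ≤ eM z i j) ∧
      (∀ i j, eM z i j ≤ eM y i j) ∧
      (∃ i j : ℕ, i < N + 1 ∧ j < N ∧ eM x i j < eM z i j) := by
  obtain ⟨p, hbelow, hplt⟩ := exists_first_diff hxy h
  set a := x p with hadef
  set Sq := Finset.univ.filter (fun r : Fin N =>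
      p.val < r.val ∧ a.val < (x r).val ∧ (x r).val ≤ (y p).val) with hSq
  have hS : Sq.Nonempty := by
    have hxw : x (x.symm (y p)) = y p := x.apply_symm_apply _
    have hwp : p.val < (x.symm (y p)).val := by
      rcases Nat.lt_trichotomy ((x.symm (y p)).val) p.val with hc | hc | hc
      · exfalso
        have h1 := hbelow _ hc
        have h2 : y (x.symm (y p)) = y p := by rw [← h1, hxw]
        have h3 := y.injective h2
        rw [h3] at hc
        omega
      · exfalso
        have h1 : x.symm (y p) = p := Fin.ext hc
        rw [h1] at hxw
        have := congrArg Fin.val hxw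
        omega
      · exact hc
    exact ⟨x.symm (y p), Finset.mem_filter.mpr ⟨Finset.mem_univ _, hwp,
      by rw [hxw]; exact hplt, by rw [hxw]⟩⟩
  set q := Finset.min' Sq hS with hqdef
  have hqmem := Finset.min'_mem Sq hS
  obtain ⟨hpq, hab, hbyp⟩ : p.val < q.val ∧ a.val < (x q).val ∧ (x q).val ≤ (y p).val :=
    (Finset.mem_filter.mp (hqmem)).2
  set b := x q with hbdef
  have hqmin : ∀ r : Fin N, p.val < r.val → r.val < q.val →
      ¬(a.val < (x r).val ∧ (x r).val ≤ (y p).val) := by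
    intro r h1 h2 hc
    have hle := Finset.min'_le Sq r (Finset.mem_filter.mpr ⟨Finset.mem_univ r, h1, hc.1, hc.2⟩)
    rw [Fin.le_def] at hle
    omega
  have hsa : x.symm a = p := x.symm_apply_apply p
  have hsb : x.symm b = q := x.symm_apply_apply q
  set z := Equiv.swap a b * x with hzdef
  have heswap : ∀ i j : ℕ, eM z i j = eM x i j +
      (if p.val < i ∧ i ≤ q.val ∧ a.val < j ∧ j ≤ b.val then 1 else 0) := by
    intro i j
    have hh := eM_swap x a b hab (by rw [hsa, hsb]; exact hpq) i j
    rwa [hsa, hsb] at hh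
  have key : ∀ i j : ℕ, p.val < i → i ≤ q.val → a.val < j → j ≤ b.val →
      eM x i j + 1 ≤ eM y i j := by
    intro i j h1 h2 h3 h4
    have hsx := eM_split x (show p.val + 1 ≤ i by omega) j
    have hsy := eM_split y (show p.val + 1 ≤ i by omega) j
    have hsx' := eM_split x (show p.val + 1 ≤ i by omega) ((y p).val + 1)
    have hsy' := eM_split y (show p.val + 1 ≤ i by omega) ((y p).val + 1)
    have hex : eM x (p.val + 1) j = eM x p.val j := by
      rw [eM_succ, if_neg (by omega), Nat.add_zero]
    have hey : eM y (p.val + 1) j = eM y p.val j + 1 := by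
      rw [eM_succ, if_pos (by omega)]
    have hex' : eM x (p.val + 1) ((y p).val + 1) = eM x p.val ((y p).val + 1) := by
      rw [eM_succ, if_neg (by omega), Nat.add_zero]
    have hey' : eM y (p.val + 1) ((y p).val + 1) = eM y p.val ((y p).val + 1) := by
      rw [eM_succ, if_neg (by omega), Nat.add_zero]
    have heq1 : eM x p.val j = eM y p.val j := eM_congr_below hbelow j
    have heq2 : eM x p.val ((y p).val + 1) = eM y p.val ((y p).val + 1) :=
      eM_congr_below hbelow _
    have htx : (Finset.univ.filter (fun r : Fin N =>
          p.val + 1 ≤ r.val ∧ r.val < i ∧ j ≤ (x r).val)).card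
        = (Finset.univ.filter (fun r : Fin N =>
          p.val + 1 ≤ r.val ∧ r.val < i ∧ (y p).val + 1 ≤ (x r).val)).card := by
      congr 1
      ext r
      simp only [Finset.mem_filter, Finset.mem_univ, true_and]
      constructor
      · rintro ⟨ha1, ha2, ha3⟩
        refine ⟨ha1, ha2, ?_⟩
        by_contra hc
        exact hqmin r (by omega) (by omega) ⟨by omega, by omega⟩
      · rintro ⟨ha1, ha2, ha3⟩
        exact ⟨ha1, ha2, by omega⟩
    have hty : (Finset.univ.filter (fun r : Fin N =>
          p.val + 1 ≤ r.val ∧ r.val < i ∧ (y p).val + 1 ≤ (y r).val)).card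
        ≤ (Finset.univ.filter (fun r : Fin N =>
          p.val + 1 ≤ r.val ∧ r.val < i ∧ j ≤ (y r).val)).card := by
      apply Finset.card_le_card
      intro r hr
      simp only [Finset.mem_filter, Finset.mem_univ, true_and] at hr ⊢
      omega
    have hcmp := h i ((y p).val + 1)
    omega
  have habne : a ≠ b := fun hh => by
    have := congrArg Fin.val hh
    omega
  refine ⟨z, ⟨⟨a, b, habne, hzdef⟩, ?_⟩, ?_, ?_, ⟨p.val + 1, b.val, by omega, b.isLt, ?_⟩⟩
  · rw [hzdef]
    exact invCount_lt_swap x a b hab (by rw [hsa, hsb]; exact hpq)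
  · intro i j
    rw [heswap]
    omega
  · intro i j
    rw [heswap]
    split_ifs with hc
    · have := key i j hc.1 hc.2.1 hc.2.2.1 hc.2.2.2
      omega
    · have := h i j
      omega
  · rw [heswap, if_pos ⟨by omega, by omega, by omega, le_rfl⟩]
    omega

def eMeasure (x y : Equiv.Perm (Fin N)) : ℕ :=
  ∑ pr ∈ Finset.range (N + 1) ×ˢ Finset.range N, (eM y pr.1 pr.2 - eM x pr.1 pr.2)

lemma bruhat_of_eM_le : ∀ (c : ℕ) (x y : Equiv.Perm (Fin N)),
    (∀ i j, eM x i j ≤ eM y i j) → eMeasure x y ≤ c → BruhatLE x y := by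
  intro c
  induction c with
  | zero =>
    intro x y h hc
    have hxy : x = y := by
      by_contra hxy
      obtain ⟨p, hbelow, hplt⟩ := exists_first_diff hxy h
      have h1 : eM x (p.val+1) (y p).val < eM y (p.val+1) (y p).val := by
        rw [eM_succ, eM_succ, eM_congr_below hbelow, if_pos le_rfl, if_neg (by omega)]
        omega
      have hmem : ((p.val+1), (y p).val) ∈ Finset.range (N+1) ×ˢ Finset.range N := by
        simp only [Finset.mem_product, Finset.mem_range]
        exact ⟨by have := p.isLt; omega, (y p).isLt⟩
      have hle := Finset.single_le_sum
        (f := fun pr : ℕ × ℕ => eM y pr.1 pr.2 - eM x pr.1 pr.2)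
        (fun pr _ => Nat.zero_le _) hmem
      have hle' : eM y (p.val + 1) (y p).val - eM x (p.val + 1) (y p).val
          ≤ eMeasure x y := by simpa [eMeasure] using hle
      omega
    rw [hxy]
    exact Relation.ReflTransGen.refl
  | succ c ih =>
    intro x y h hc
    by_cases hxy : x = y
    · rw [hxy]
      exact Relation.ReflTransGen.refl
    · obtain ⟨z, hstep, hxz, hzy, ⟨i0, j0, hi0, hj0, hstrict⟩⟩ := exists_step hxy h
      have hlt : eMeasure z y < eMeasure x y := by
        unfold eMeasure
        apply Finset.sum_lt_sum
        · intro pr _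
          exact Nat.sub_le_sub_left (hxz pr.1 pr.2) _
        · refine ⟨(i0, j0), ?_, ?_⟩
          · simp only [Finset.mem_product, Finset.mem_range]
            exact ⟨hi0, hj0⟩
          · exact Nat.sub_lt_sub_left (lt_of_lt_of_le hstrict (hzy i0 j0)) hstrict
      exact Relation.ReflTransGen.head hstep (ih z y hzy (by omega))

/-- THE criterion: Bruhat order is characterized by pointwise comparison
of the rank functions. -/
theorem bruhatLE_iff_eM (x y : Equiv.Perm (Fin N)) :
    BruhatLE x y ↔ ∀ i j : ℕ, eM x i j ≤ eM y i j :=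
  ⟨bruhatLE_mono, fun h => bruhat_of_eM_le (eMeasure x y) x y h le_rfl⟩

/-! ### Reduction of the rank criterion to the pattern permutations -/

def Kf {N : ℕ} (D : Finset (Fin N)) (i : ℕ) : ℕ :=
  (Finset.univ.filter (fun r : Fin N => r ∈ D ∧ r.val < i)).card

lemma lower_mem_iff {m : ℕ} (S : Finset (Fin m))
    (hS : ∀ k1 k2 : Fin m, k1 ≤ k2 → k2 ∈ S → k1 ∈ S) (k : Fin m) :
    k ∈ S ↔ k.val < S.card := by
  constructor
  · intro hk
    have hsub : Finset.Iic k ⊆ S := fun k' hk' => hS k' k (Finset.mem_Iic.mp hk') hk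
    have hcard := Finset.card_le_card hsub
    rw [Fin.card_Iic] at hcard
    omega
  · intro hk
    by_contra hc
    have hsub : S ⊆ Finset.Iio k := by
      intro k' hk'
      rw [Finset.mem_Iio]
      rcases lt_or_ge k' k with hlt | hle
      · exact hlt
      · exact absurd (hS k k' hle hk') hc
    have hcard := Finset.card_le_card hsub
    rw [Fin.card_Iio] at hcard
    omega

lemma orderIso_val_lt_iff {N m : ℕ} (D : Finset (Fin N)) (hm : D.card = m)
    (i : ℕ) (k : Fin m) :
    ((D.orderIsoOfFin hm k : Fin N).val < i) ↔ k.val < Kf D i := by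
  set φ := D.orderIsoOfFin hm with hφ
  set S := Finset.univ.filter (fun k : Fin m => (φ k : Fin N).val < i) with hSdef
  have hlower : ∀ k1 k2 : Fin m, k1 ≤ k2 → k2 ∈ S → k1 ∈ S := by
    intro k1 k2 hle hk2
    have h2 := (Finset.mem_filter.mp hk2).2
    have hmono : φ k1 ≤ φ k2 := φ.monotone hle
    have hcoe : (φ k1 : Fin N) ≤ (φ k2 : Fin N) := hmono
    rw [Fin.le_def] at hcoe
    exact Finset.mem_filter.mpr ⟨Finset.mem_univ _, by omega⟩
  have hcard : S.card = Kf D i := by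
    unfold Kf
    apply Finset.card_bij (fun (k : Fin m) (_ : k ∈ S) => (φ k : Fin N))
    · intro k hk
      exact Finset.mem_filter.mpr ⟨Finset.mem_univ _, (φ k).2, (Finset.mem_filter.mp hk).2⟩
    · intro k1 _ k2 _ heq
      exact φ.injective (Subtype.ext heq)
    · intro r hr
      obtain ⟨-, hrD, hri⟩ := Finset.mem_filter.mp hr
      refine ⟨φ.symm ⟨r, hrD⟩, Finset.mem_filter.mpr ⟨Finset.mem_univ _, ?_⟩, ?_⟩
      · show ((φ (φ.symm ⟨r, hrD⟩) : Fin N)).val < i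
        rw [φ.apply_symm_apply]
        exact hri
      · rw [φ.apply_symm_apply]
  have hiff := lower_mem_iff S hlower k
  rw [hcard] at hiff
  rw [← hiff, hSdef]
  simp

lemma orderIso_val_le_iff {N m : ℕ} (V : Finset (Fin N)) (hVcard : V.card = m)
    (j : ℕ) (l : Fin m) :
    (j ≤ (V.orderIsoOfFin hVcard l : Fin N).val) ↔ Kf V j ≤ l.val := by
  have h := orderIso_val_lt_iff V hVcard j l
  omega

lemma eM_decomp {N m : ℕ} (D V : Finset (Fin N)) (hm : D.card = m) (hVcard : V.card = m)
    (x : Equiv.Perm (Fin N)) (x' : Equiv.Perm (Fin m))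
    (hx' : ∀ k : Fin m,
      ((V.orderIsoOfFin hVcard (x' k)) : Fin N) = x ((D.orderIsoOfFin hm k) : Fin N))
    (i j : ℕ) :
    eM x i j
      = (Finset.univ.filter (fun r : Fin N => r ∉ D ∧ r.val < i ∧ j ≤ (x r).val)).card
        + eM x' (Kf D i) (Kf V j) := by
  unfold eM
  rw [← Finset.card_filter_add_card_filter_not (p := fun r : Fin N => r ∈ D),
    Finset.filter_filter, Finset.filter_filter, add_comm]
  congr 1
  · congr 1
    ext r
    simp only [Finset.mem_filter, Finset.mem_univ, true_and]
    tauto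
  · have hbij : (Finset.univ.filter
        (fun k : Fin m => k.val < Kf D i ∧ Kf V j ≤ (x' k).val)).card
        = (Finset.univ.filter
        (fun r : Fin N => (r.val < i ∧ j ≤ (x r).val) ∧ r ∈ D)).card := by
      apply Finset.card_bij
        (fun (k : Fin m) (_ : k ∈ Finset.univ.filter
          (fun k : Fin m => k.val < Kf D i ∧ Kf V j ≤ (x' k).val)) =>
          ((D.orderIsoOfFin hm k : Fin N)))
      · intro k hk
        obtain ⟨-, hk1, hk2⟩ := Finset.mem_filter.mp hk
        refine Finset.mem_filter.mpr ⟨Finset.mem_univ _, ⟨?_, ?_⟩, (D.orderIsoOfFin hm k).2⟩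
        · exact (orderIso_val_lt_iff D hm i k).mpr hk1
        · rw [← hx' k]
          exact (orderIso_val_le_iff V hVcard j (x' k)).mpr hk2
      · intro k1 _ k2 _ heq
        exact (D.orderIsoOfFin hm).injective (Subtype.ext heq)
      · intro r hr
        obtain ⟨-, ⟨hri, hrj⟩, hrD⟩ := Finset.mem_filter.mp hr
        set k := (D.orderIsoOfFin hm).symm ⟨r, hrD⟩ with hkdef
        have hk : ((D.orderIsoOfFin hm k : Fin N)) = r := by
          rw [hkdef, (D.orderIsoOfFin hm).apply_symm_apply]
        refine ⟨k, Finset.mem_filter.mpr ⟨Finset.mem_univ _, ?_, ?_⟩, hk⟩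
        · rw [← orderIso_val_lt_iff D hm i k, hk]
          exact hri
        · rw [← orderIso_val_le_iff V hVcard j (x' k), hx' k, hk]
          exact hrj
    rw [← hbij]

lemma Kf_zero {N : ℕ} (D : Finset (Fin N)) : Kf D 0 = 0 := by
  simp [Kf]

lemma Kf_top {N : ℕ} (D : Finset (Fin N)) : Kf D N = D.card := by
  unfold Kf
  congr 1
  ext r
  simp [r.isLt]

lemma Kf_succ_le {N : ℕ} (D : Finset (Fin N)) (i : ℕ) : Kf D (i + 1) ≤ Kf D i + 1 := by
  unfold Kf
  have hsub : Finset.univ.filter (fun r : Fin N => r ∈ D ∧ r.val < i + 1)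
      ⊆ (Finset.univ.filter fun r : Fin N => r ∈ D ∧ r.val < i)
        ∪ (Finset.univ.filter fun r : Fin N => r.val = i) := by
    intro r hr
    simp only [Finset.mem_filter, Finset.mem_union, Finset.mem_univ, true_and] at hr ⊢
    rcases hr with ⟨hD, hlt⟩
    rcases Nat.lt_or_ge r.val i with hgt | hge
    · exact Or.inl ⟨hD, hgt⟩
    · exact Or.inr (by omega)
  have hone : (Finset.univ.filter fun r : Fin N => r.val = i).card ≤ 1 := by
    apply Finset.card_le_one.mpr
    intro c hc d hd
    simp only [Finset.mem_filter] at hc hd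
    exact Fin.ext (by omega)
  have h1 := Finset.card_le_card hsub
  have h2 := Finset.card_union_le
    (Finset.univ.filter fun r : Fin N => r ∈ D ∧ r.val < i)
    (Finset.univ.filter fun r : Fin N => r.val = i)
  omega

lemma reach_aux (f : ℕ → ℕ) (h0 : f 0 = 0) (hstep : ∀ i, f (i + 1) ≤ f i + 1) :
    ∀ (M c : ℕ), c ≤ f M → ∃ i, f i = c := by
  intro M
  induction M with
  | zero => intro c hc; exact ⟨0, by omega⟩
  | succ M ih =>
    intro c hc
    by_cases h : c ≤ f M
    · exact ih c h
    · exact ⟨M + 1, by have := hstep M; omega⟩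

lemma Kf_surj {N : ℕ} (D : Finset (Fin N)) {c : ℕ} (hc : c ≤ D.card) : ∃ i, Kf D i = c :=
  reach_aux (Kf D) (Kf_zero D) (Kf_succ_le D) N c (by rw [Kf_top]; exact hc)

lemma eM_trunc {m : ℕ} (x' : Equiv.Perm (Fin m)) (k l : ℕ) :
    eM x' k l = eM x' (min k m) (min l m) := by
  unfold eM
  congr 1
  ext r
  simp only [Finset.mem_filter, Finset.mem_univ, true_and]
  have h1 := r.isLt
  have h2 := (x' r).isLt
  omega

end SubwordAux

/-- Subword Condition: let `u, v ∈ S_{n+1}` agree except at the positions in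
`D` (listed in increasing order by `D.orderIsoOfFin`), let `m = |D|` and let
`u', v' ∈ S_m` be the permutations of the `m`-element set of values `V = u(D)` (with its
induced total order, via `V.orderIsoOfFin`) given in one-line notation by the values of
`u` (resp. `v`) along `D`.  Then `u ≤ v` in Bruhat order iff `u' ≤ v'` in Bruhat order. -/
theorem subword_condition (n : ℕ) (u v : Equiv.Perm (Fin (n + 1)))
    (D : Finset (Fin (n + 1))) (hD : D = Finset.univ.filter (fun i => u i ≠ v i))
    (m : ℕ) (hm : D.card = m)
    (V : Finset (Fin (n + 1))) (hV : V = D.image u) (hVcard : V.card = m)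
    (u' v' : Equiv.Perm (Fin m))
    (hu' : ∀ k : Fin m, (V.orderIsoOfFin hVcard (u' k) : Fin (n + 1))
        = u (D.orderIsoOfFin hm k : Fin (n + 1)))
    (hv' : ∀ k : Fin m, (V.orderIsoOfFin hVcard (v' k) : Fin (n + 1))
        = v (D.orderIsoOfFin hm k : Fin (n + 1))) :
    BruhatLE u v ↔ BruhatLE u' v' := by
  classical
  have hagree : ∀ r : Fin (n + 1), r ∉ D → u r = v r := by
    intro r hr
    by_contra hc
    exact hr (hD ▸ Finset.mem_filter.mpr ⟨Finset.mem_univ r, hc⟩)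
  have hCeq : ∀ i j : ℕ,
      (Finset.univ.filter (fun r : Fin (n + 1) => r ∉ D ∧ r.val < i ∧ j ≤ (u r).val)).card
      = (Finset.univ.filter (fun r : Fin (n + 1) => r ∉ D ∧ r.val < i ∧ j ≤ (v r).val)).card := by
    intro i j
    congr 1
    ext r
    simp only [Finset.mem_filter, Finset.mem_univ, true_and]
    constructor
    · rintro ⟨h1, h2, h3⟩
      exact ⟨h1, h2, by rw [← hagree r h1]; exact h3⟩
    · rintro ⟨h1, h2, h3⟩
      exact ⟨h1, h2, by rw [hagree r h1]; exact h3⟩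
  have hdecU := SubwordAux.eM_decomp D V hm hVcard u u' hu'
  have hdecV := SubwordAux.eM_decomp D V hm hVcard v v' hv'
  rw [SubwordAux.bruhatLE_iff_eM, SubwordAux.bruhatLE_iff_eM]
  constructor
  · intro hbig k l
    obtain ⟨i, hi⟩ := SubwordAux.Kf_surj D (c := min k m) (by rw [hm]; omega)
    obtain ⟨j, hj⟩ := SubwordAux.Kf_surj V (c := min l m) (by rw [hVcard]; omega)
    have h1 := hbig i j
    rw [hdecU i j, hdecV i j, hCeq i j] at h1
    have h2 : SubwordAux.eM u' (SubwordAux.Kf D i) (SubwordAux.Kf V j)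
        ≤ SubwordAux.eM v' (SubwordAux.Kf D i) (SubwordAux.Kf V j) := by omega
    rw [hi, hj] at h2
    rw [SubwordAux.eM_trunc u' k l, SubwordAux.eM_trunc v' k l]
    exact h2
  · intro hsmall i j
    rw [hdecU i j, hdecV i j, hCeq i j]
    exact Nat.add_le_add_left (hsmall _ _) _
end

section
/- Let x ∈ S_{n+1} and let i, j be values with 0 < i, j, such that i occurs to the left of j in the one-line notation of x (i.e. x^{-1}(i) < x^{-1}(j)), and both occur to the right of 0. Let t_{(0,i)} and t_{(0,j)} denote the transpositions swapping 0 with i and with j. If i > j then t_{(0,i)}x and t_{(0,j)}x are incomparable in Bruhat order; if i < j then t_{(0,i)}x < t_{(0,j)}x in Bruhat order. -/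
open Polynomial

/-!
Bruhat order is detected by the rank function `r_u(p, k) = #{q ≤ p | k ≤ u q}`: an upward edge
`u → u * (a b)` with `a < b` must have `u a < u b` (otherwise the swap would remove inversions),
so it moves the larger value leftwards and can only raise `r_u`. Let `c < a, b` be the positions of
`0, i, j` in `x`. If `j < i`, the rank at `(c, i)` is larger for `t_{(0,i)} x`, while the rank at
`(a, j)` is larger for `t_{(0,j)} x`. If `i < j`, then `t_{(0,i)} x * (a b) * (c a) = t_{(0,j)} x`
and both right multiplications swap an increasing pair of values, hence raise the inversion count.
-/

open Equiv Finset

theorem swap_lt_swap_of_notMem_Ioo {α : Type*} [LinearOrder α] {a b p q : α} (hab : a < b)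
    (hpq : p < q) (hp : p ∉ Set.Ioo a b) (hq : q ∉ Set.Ioo a b) (hne : ¬(p = a ∧ q = b)) :
    swap a b p < swap a b q := by
  simp only [Set.mem_Ioo, not_and, not_lt] at hp hq
  rw [swap_apply_def, swap_apply_def]
  split_ifs <;> grind

theorem swap_mem_Ioo_iff {α : Type*} [LinearOrder α] {a b r : α} :
    swap a b r ∈ Set.Ioo a b ↔ r ∈ Set.Ioo a b := by
  simp only [Set.mem_Ioo, swap_apply_def]
  split_ifs <;> grind

section Inversions

variable {m : ℕ}

def inversions (u : Perm (Fin m)) : Finset (Fin m × Fin m) := {P | P.1 < P.2 ∧ u P.2 < u P.1}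

@[simp]
theorem mem_inversions {u : Perm (Fin m)} {P : Fin m × Fin m} :
    P ∈ inversions u ↔ P.1 < P.2 ∧ u P.2 < u P.1 := by
  simp [inversions]

theorem invCount_eq_card_inversions (u : Perm (Fin m)) : invCount u = #(inversions u) := rfl

theorem mul_swap_apply_lt_of_mem_Ioo (u : Perm (Fin m)) {a b p q : Fin m} (hu : u a < u b)
    (hpq : p < q) (hinv : u q < u p) (hin : p ∈ Set.Ioo a b ∨ q ∈ Set.Ioo a b) :
    (u * swap a b) q < (u * swap a b) p := by
  simp only [Set.mem_Ioo] at hin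
  simp only [Perm.mul_apply, swap_apply_def]
  split_ifs <;> grind

theorem invCount_lt_invCount_mul_swap (u : Perm (Fin m)) {a b : Fin m} (hab : a < b)
    (hu : u a < u b) : invCount u < invCount (u * swap a b) := by
  set τ := swap a b
  -- An involution of position pairs carrying inversions of `u` to inversions of `u * τ`.
  let θ (P : Fin m × Fin m) : Fin m × Fin m :=
    if P.1 ∈ Set.Ioo a b ∨ P.2 ∈ Set.Ioo a b then P else (τ P.1, τ P.2)
  have hθ : Function.Involutive θ := by
    intro P
    by_cases hP : P.1 ∈ Set.Ioo a b ∨ P.2 ∈ Set.Ioo a b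
    · simp only [θ, if_pos hP]
    · simp only [θ, if_neg hP, swap_mem_Ioo_iff, swap_apply_self, τ]
  have hsub : (inversions u).image θ ⊆ inversions (u * τ) := by
    simp only [subset_iff, mem_image, mem_inversions]
    rintro _ ⟨⟨p, q⟩, ⟨hpq, hinv⟩, rfl⟩
    by_cases hP : p ∈ Set.Ioo a b ∨ q ∈ Set.Ioo a b
    · simp only [θ, if_pos hP]
      exact ⟨hpq, mul_swap_apply_lt_of_mem_Ioo u hu hpq hinv hP⟩
    · simp only [θ, if_neg hP, Perm.mul_apply, swap_apply_self, τ]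
      refine ⟨swap_lt_swap_of_notMem_Ioo hab hpq (by tauto) (by tauto) ?_, hinv⟩
      rintro ⟨rfl, rfl⟩
      exact hinv.not_gt hu
  have hab_mem : (a, b) ∈ inversions (u * τ) := by
    simpa [τ] using ⟨hab, hu⟩
  have hab_notMem : (a, b) ∉ (inversions u).image θ := by
    simp only [mem_image, mem_inversions, not_exists, not_and]
    intro P hP hθP
    have : P = (b, a) := by
      rw [← hθ P, hθP]
      simp [θ, τ]
    subst this
    exact hP.1.not_gt hab
  rw [invCount_eq_card_inversions, invCount_eq_card_inversions,
    ← card_image_of_injective _ hθ.injective]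
  exact card_lt_card ((ssubset_iff_of_subset hsub).2 ⟨_, hab_mem, hab_notMem⟩)

theorem lt_of_invCount_lt_invCount_mul_swap {u : Perm (Fin m)} {a b : Fin m} (hab : a < b)
    (h : invCount u < invCount (u * swap a b)) : u a < u b := by
  by_contra! hba
  have hlt : (u * swap a b) a < (u * swap a b) b := by
    simpa using lt_of_le_of_ne hba (u.injective.ne hab.ne')
  have := invCount_lt_invCount_mul_swap (u * swap a b) hab hlt
  rw [mul_assoc, swap_mul_self, mul_one] at this
  exact this.not_gt h

end Inversions

section BruhatOrder

variable {m : ℕ}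

def rankCount (u : Perm (Fin m)) (p k : Fin m) : ℕ := #{q ∈ Iic p | k ≤ u q}

theorem rankCount_mul_swap_of_le_iff_le (u : Perm (Fin m)) {a b p : Fin m} (k : Fin m)
    (h : a ≤ p ↔ b ≤ p) : rankCount (u * swap a b) p k = rankCount u p k := by
  unfold rankCount
  refine card_equiv (swap a b) fun q => ?_
  rw [mem_filter, mem_filter, mem_Iic, mem_Iic, Perm.mul_apply, and_congr_left_iff]
  intro
  rw [swap_apply_def]
  split_ifs <;> simp_all

theorem rankCount_mul_swap_add (u : Perm (Fin m)) {a b p : Fin m} (k : Fin m) (ha : a ≤ p)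
    (hb : p < b) :
    rankCount (u * swap a b) p k + (if k ≤ u a then 1 else 0) =
      rankCount u p k + (if k ≤ u b then 1 else 0) := by
  have hmem : a ∈ Iic p := mem_Iic.2 ha
  have hfix : ∀ q ∈ (Iic p).erase a, (u * swap a b) q = u q := fun q hq => by
    have hqb : q ≠ b := ((mem_Iic.1 (mem_of_mem_erase hq)).trans_lt hb).ne
    simp [swap_apply_of_ne_of_ne (ne_of_mem_erase hq) hqb]
  simp only [rankCount, card_filter]
  rw [← add_sum_erase _ _ hmem, ← add_sum_erase _ _ hmem, sum_congr rfl fun q hq => by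
    rw [hfix q hq]]
  simp only [Perm.mul_apply, swap_apply_left]
  ring

theorem rankCount_le_rankCount_mul_swap (u : Perm (Fin m)) {a b : Fin m} (hab : a < b)
    (hu : u a < u b) (p k : Fin m) : rankCount u p k ≤ rankCount (u * swap a b) p k := by
  by_cases hp : a ≤ p ∧ p < b
  · have := rankCount_mul_swap_add u k hp.1 hp.2
    have : (if k ≤ u a then 1 else 0) ≤ (if k ≤ u b then 1 else 0) := by
      split_ifs <;> grind
    omega
  · rw [rankCount_mul_swap_of_le_iff_le u k (by grind)]

theorem rankCount_le_of_invCount_lt_invCount_mul_swap {u : Perm (Fin m)} {a b : Fin m}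
    (h : invCount u < invCount (u * swap a b)) (p k : Fin m) :
    rankCount u p k ≤ rankCount (u * swap a b) p k := by
  rcases lt_trichotomy a b with hab | rfl | hba
  · exact rankCount_le_rankCount_mul_swap u hab (lt_of_invCount_lt_invCount_mul_swap hab h) p k
  · rw [swap_self, ← Perm.one_def, mul_one]
  · rw [swap_comm] at h ⊢
    exact rankCount_le_rankCount_mul_swap u hba (lt_of_invCount_lt_invCount_mul_swap hba h) p k

theorem BruhatLE.rankCount_le {u v : Perm (Fin m)} (h : BruhatLE u v) (p k : Fin m) :
    rankCount u p k ≤ rankCount v p k := by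
  induction h with
  | refl => rfl
  | tail _ hedge ih =>
    obtain ⟨⟨i, j, -, rfl⟩, hlen⟩ := hedge
    rw [swap_mul_eq_mul_swap] at hlen ⊢
    exact ih.trans (rankCount_le_of_invCount_lt_invCount_mul_swap hlen p k)

theorem bruhatLE_mul_swap (u : Perm (Fin m)) {a b : Fin m} (hab : a < b) (hu : u a < u b) :
    BruhatLE u (u * swap a b) :=
  .single ⟨⟨u a, u b, u.injective.ne hab.ne, mul_swap_eq_swap_mul u a b⟩,
    invCount_lt_invCount_mul_swap u hab hu⟩

theorem bruhatLE_mul_swap_mul_swap (u : Perm (Fin m)) {a b c : Fin m} (hca : c < a) (hab : a < b)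
    (hucb : u c < u b) (huab : u a < u b) : BruhatLE (u * swap c a) (u * swap c b) := by
  have hup1 := bruhatLE_mul_swap (u * swap c a) hab (by
    simpa [swap_apply_of_ne_of_ne (hca.trans hab).ne' hab.ne'] using hucb)
  have hup2 := bruhatLE_mul_swap (u * swap c a * swap a b) hca (by
    simpa [swap_apply_of_ne_of_ne hca.ne (hca.trans hab).ne,
      swap_apply_of_ne_of_ne (hca.trans hab).ne' hab.ne'] using huab)
  have hconj : swap c a * swap a b * swap c a = swap c b := by
    rw [swap_comm c a, swap_comm a b]
    exact swap_mul_swap_mul_swap hab.ne' (hca.trans hab).ne'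
  have hend : u * swap c a * swap a b * swap c a = u * swap c b := by
    rw [← hconj, mul_assoc, mul_assoc, mul_assoc]
  exact hup1.trans (hend ▸ hup2)

end BruhatOrder

/-- let `x ∈ S_{n+1}` and `i, j` nonzero values occurring to the right of `0`
in the one-line notation of `x`, with `i` to the left of `j`.  If `i > j` then
`t_{(0,i)} x` and `t_{(0,j)} x` are incomparable in Bruhat order; if `i < j` then
`t_{(0,i)} x < t_{(0,j)} x`. -/
theorem swap_zero_comparisons (n : ℕ) (x : Equiv.Perm (Fin (n + 1))) (i j : Fin (n + 1))
    (hi : 0 < i) (hj : 0 < j)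
    (h0i : x⁻¹ 0 < x⁻¹ i) (h0j : x⁻¹ 0 < x⁻¹ j) (hij : x⁻¹ i < x⁻¹ j) :
    (j < i →
      ¬ BruhatLE (Equiv.swap 0 i * x) (Equiv.swap 0 j * x) ∧
      ¬ BruhatLE (Equiv.swap 0 j * x) (Equiv.swap 0 i * x)) ∧
    (i < j → BruhatLT (Equiv.swap 0 i * x) (Equiv.swap 0 j * x)) := by
  rw [swap_mul_eq_mul_swap, swap_mul_eq_mul_swap]
  set c := x⁻¹ 0
  set a := x⁻¹ i
  set b := x⁻¹ j
  have hxc : x c = 0 := x.apply_symm_apply 0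
  have hxa : x a = i := x.apply_symm_apply i
  have hxb : x b = j := x.apply_symm_apply j
  refine ⟨fun hji => ⟨fun hle => ?_, fun hle => ?_⟩, fun hij' => ⟨?_, fun heq => ?_⟩⟩
  · have hrank := hle.rankCount_le c i
    have hy := rankCount_mul_swap_add x i le_rfl h0i
    have hz := rankCount_mul_swap_add x i le_rfl h0j
    simp only [hxc, hxa, hxb, hi.not_ge, hji.not_ge, le_rfl, if_true, if_false] at hy hz
    omega
  · have hrank := hle.rankCount_le a j
    have hy := rankCount_mul_swap_of_le_iff_le x j (iff_of_true h0i.le le_rfl)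
    have hz := rankCount_mul_swap_add x j h0i.le hij
    simp only [hxc, hxb, hj.not_ge, le_rfl, if_true, if_false] at hz
    omega
  · exact bruhatLE_mul_swap_mul_swap x h0i hij (by rwa [hxc, hxb]) (by rwa [hxa, hxb])
  · have hca := congrArg (· a) (mul_left_cancel heq)
    simp only [swap_apply_right, swap_apply_of_ne_of_ne h0i.ne' hij.ne] at hca
    exact h0i.ne hca
end

section
/- Let x = (0, n, n-1, ..., 2, 1) ∈ S_{n+1} (in one-line notation) and w_0 the longest element. Then the Bruhat interval [x, w_0] is isomorphic as a poset to the Boolean lattice of subsets of {1,...,n}. -/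
open Polynomial

/-!
In one-line notation `x = Equiv.neg`. For `A ⊆ {1, …, n}` put `z_A = x · c_A`, where `c_A` is the
cycle `0 → a₁ → ⋯ → aₖ → 0` through `{0} ∪ A` in increasing order; `z_∅ = x` and `z_{1..n} = w₀`.
Adding `b` to `A` multiplies `z_A` on the right by the transposition of `b` and its predecessor in
`{0} ∪ A`, which raises the length, so `A ⊆ B` gives `z_A ≤ z_B`. Conversely, an upward Bruhat
edge starting from a permutation with `z i ≤ -i` for all `i ≠ 0` keeps these bounds and keeps the
strict ones strict. Such a `z` is determined by the set `A` of strict positions: `t ↦ -z t`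
permutes `{0} ∪ A` and moves every element up except the one sent to `0`, which forces it to be
`c_A`.
-/

open Equiv Finset

section Inversions

variable {N : ℕ}

theorem invCount_lt_invCount_mul_swap_s7 (w : Perm (Fin N)) {p q : Fin N} (hpq : p < q)
    (hw : w p < w q) : invCount w < invCount (w * swap p q) := by
  -- `swap p q` keeps the relative order of a pair unless an entry lies strictly between `p`
  -- and `q` (or the pair is `(p, q)`): such pairs are kept, the others are transported.
  let g : Fin N × Fin N → Fin N × Fin N := fun r =>
    if r.1 ∈ Set.Ioo p q ∨ r.2 ∈ Set.Ioo p q then r else (swap p q r.1, swap p q r.2)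
  have hg : Function.Injective g := by
    have hIoo : ∀ a, swap p q a ∈ Set.Ioo p q ↔ a ∈ Set.Ioo p q := by
      intro a
      simp only [swap_apply_def, Set.mem_Ioo]
      split_ifs <;> grind
    refine Function.Involutive.injective fun r => ?_
    by_cases h : r.1 ∈ Set.Ioo p q ∨ r.2 ∈ Set.Ioo p q
    · simp only [g, if_pos h]
    · have h' : ¬(swap p q r.1 ∈ Set.Ioo p q ∨ swap p q r.2 ∈ Set.Ioo p q) := by
        simpa only [hIoo] using h
      simp only [g, if_neg h, if_neg h', swap_apply_self]
  have hmaps : ∀ r ∈ univ.filter (fun r : Fin N × Fin N => r.1 < r.2 ∧ w r.2 < w r.1),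
      g r ∈ (univ.filter (fun r : Fin N × Fin N =>
        r.1 < r.2 ∧ (w * swap p q) r.2 < (w * swap p q) r.1)).erase (p, q) := by
    rintro ⟨i, j⟩ hr
    simp only [g, mem_erase, mem_filter, mem_univ, true_and, Perm.mul_apply, swap_apply_def,
      Set.mem_Ioo] at hr ⊢
    split_ifs <;> grind
  have hpq_mem : (p, q) ∈ univ.filter (fun r : Fin N × Fin N =>
      r.1 < r.2 ∧ (w * swap p q) r.2 < (w * swap p q) r.1) :=
    mem_filter.mpr ⟨mem_univ _, hpq, by simpa using hw⟩
  calc invCount w ≤ _ := card_le_card_of_injOn g hmaps hg.injOn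
    _ < invCount (w * swap p q) := card_erase_lt_of_mem hpq_mem

theorem bruhatLE_mul_swap_s7 (u : Perm (Fin N)) {p q : Fin N} (hpq : p < q) (hu : u p < u q) :
    BruhatLE u (u * swap p q) :=
  .single ⟨⟨u p, u q, u.injective.ne hpq.ne, by rw [swap_mul_eq_mul_swap]; simp⟩,
    invCount_lt_invCount_mul_swap_s7 u hpq hu⟩

theorem exists_mul_swap_of_bruhat_edge {u v : Perm (Fin N)}
    (hv : ∃ i j : Fin N, i ≠ j ∧ v = swap i j * u) (hlt : invCount u < invCount v) :
    ∃ p q, p < q ∧ u p < u q ∧ v = u * swap p q := by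
  obtain ⟨a, b, hab, rfl⟩ := hv
  rw [swap_mul_eq_mul_swap] at hlt ⊢
  have hup : ∀ p q, p < q → invCount u < invCount (u * swap p q) → u p < u q := by
    intro p q hpq hlt
    by_contra! hle
    have hdown := invCount_lt_invCount_mul_swap_s7 (u * swap p q) hpq
      (by simpa using lt_of_le_of_ne hle (u.injective.ne hpq.ne'))
    rw [mul_swap_mul_self] at hdown
    omega
  rcases (show u⁻¹ a ≠ u⁻¹ b by simpa using hab).lt_or_gt with h | h
  · exact ⟨_, _, h, hup _ _ h hlt, rfl⟩
  · rw [swap_comm] at hlt ⊢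
    exact ⟨_, _, h, hup _ _ h hlt, rfl⟩

end Inversions

section CycSucc

variable {N : ℕ} {T : Finset (Fin (N + 1))} {i j b : Fin (N + 1)}

def cycSucc (T : Finset (Fin (N + 1))) (i : Fin (N + 1)) : Fin (N + 1) :=
  if h : (T.filter (i < ·)).Nonempty then (T.filter (i < ·)).min' h else 0

theorem cycSucc_mem (h0 : 0 ∈ T) (i : Fin (N + 1)) : cycSucc T i ∈ T := by
  unfold cycSucc
  split_ifs with h
  · exact (mem_filter.mp (min'_mem _ h)).1
  · exact h0

theorem cycSucc_le (hj : j ∈ T) (hij : i < j) : cycSucc T i ≤ j := by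
  have hmem : j ∈ T.filter (i < ·) := mem_filter.mpr ⟨hj, hij⟩
  rw [cycSucc, dif_pos ⟨j, hmem⟩]
  exact min'_le _ _ hmem

theorem lt_cycSucc (hj : j ∈ T) (hij : i < j) : i < cycSucc T i := by
  have hne : (T.filter (i < ·)).Nonempty := ⟨j, mem_filter.mpr ⟨hj, hij⟩⟩
  rw [cycSucc, dif_pos hne]
  exact (mem_filter.mp (min'_mem _ hne)).2

theorem cycSucc_eq_zero (h : ∀ j ∈ T, j ≤ i) : cycSucc T i = 0 := by
  rw [cycSucc, dif_neg]
  rintro ⟨j, hj⟩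
  rw [mem_filter] at hj
  exact (h j hj.1).not_gt hj.2

theorem cycSucc_eq (hj : j ∈ T) (hij : i < j) (hmin : ∀ k ∈ T, i < k → j ≤ k) :
    cycSucc T i = j := by
  have hmem : j ∈ T.filter (i < ·) := mem_filter.mpr ⟨hj, hij⟩
  rw [cycSucc, dif_pos ⟨j, hmem⟩]
  have hspec := mem_filter.mp (min'_mem _ ⟨j, hmem⟩)
  exact (min'_le _ _ hmem).antisymm (hmin _ hspec.1 hspec.2)

theorem cycSucc_eq_zero_or_lt (T : Finset (Fin (N + 1))) (i : Fin (N + 1)) :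
    cycSucc T i = 0 ∨ i < cycSucc T i := by
  by_cases h : ∃ j ∈ T, i < j
  · obtain ⟨j, hj, hij⟩ := h
    exact .inr (lt_cycSucc hj hij)
  · simp only [not_exists, not_and, not_lt] at h
    exact .inl (cycSucc_eq_zero h)

theorem cycSucc_injOn (T : Finset (Fin (N + 1))) : Set.InjOn (cycSucc T) T := by
  suffices h : ∀ s ∈ T, ∀ t ∈ T, s < t → cycSucc T s ≠ cycSucc T t by
    intro s hs t ht hst
    by_contra hne
    rcases lt_or_gt_of_ne hne with hlt | hlt
    · exact h s hs t ht hlt hst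
    · exact h t ht s hs hlt hst.symm
  intro s _ t ht hst heq
  have hs_lt : s < cycSucc T s := lt_cycSucc ht hst
  rcases cycSucc_eq_zero_or_lt T t with h0 | ht_lt
  · rw [heq, h0] at hs_lt
    exact Fin.not_lt_zero s hs_lt
  · exact (cycSucc_le ht hst).not_gt (heq ▸ ht_lt)

theorem cycSucc_insert (hb : ¬(i < b ∧ ∀ k ∈ T, i < k → b ≤ k)) :
    cycSucc (insert b T) i = cycSucc T i := by
  by_cases hib : i < b
  · simp only [hib, true_and, not_forall, not_le, exists_prop] at hb
    obtain ⟨k, hk, hik, hkb⟩ := hb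
    have hne : (T.filter (i < ·)).Nonempty := ⟨k, mem_filter.mpr ⟨hk, hik⟩⟩
    have hle : cycSucc T i ≤ b := (cycSucc_le hk hik).trans hkb.le
    simp only [cycSucc, filter_insert, if_pos hib, dif_pos hne, dif_pos (insert_nonempty _ _),
      min'_insert _ _ hne]
    exact min_eq_right (by simpa [cycSucc, dif_pos hne] using hle)
  · simp only [cycSucc, filter_insert, if_neg hib]

noncomputable def cycPerm (T : Finset (Fin (N + 1))) (h0 : 0 ∈ T) : Perm (Fin (N + 1)) :=
  Equiv.ofBijective (fun i => if i ∈ T then cycSucc T i else i) <|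
    Finite.injective_iff_bijective.mp fun s t hst => by
      by_cases hs : s ∈ T <;> by_cases ht : t ∈ T <;> simp only [hs, ht, if_true, if_false] at hst
      · exact cycSucc_injOn T hs ht hst
      · exact absurd (hst ▸ cycSucc_mem h0 s) ht
      · exact absurd (hst ▸ cycSucc_mem h0 t) hs
      · exact hst

theorem cycPerm_apply (h0 : 0 ∈ T) (i : Fin (N + 1)) :
    cycPerm T h0 i = if i ∈ T then cycSucc T i else i := rfl

theorem exists_cycSucc_eq (h0 : 0 ∈ T) (hj : j ∈ T) : ∃ s ∈ T, cycSucc T s = j := by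
  set s := (cycPerm T h0).symm j
  have hs : cycPerm T h0 s = j := (cycPerm T h0).apply_symm_apply j
  by_cases hsT : s ∈ T
  · exact ⟨s, hsT, by rwa [cycPerm_apply, if_pos hsT] at hs⟩
  · rw [cycPerm_apply, if_neg hsT] at hs
    exact absurd (hs ▸ hj) hsT

theorem cycPerm_insert (h0 : 0 ∈ T) {p : Fin (N + 1)} (hb : b ∉ T) (hp : p ∈ T) (hpb : p < b)
    (hmax : ∀ k ∈ T, k < b → k ≤ p) :
    cycPerm (insert b T) (mem_insert_of_mem h0) = cycPerm T h0 * swap p b := by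
  have habove : ∀ k ∈ T, p < k → b < k := fun k hk hpk =>
    lt_of_le_of_ne (not_lt.mp fun hkb => (hmax k hk hkb).not_gt hpk)
      (ne_of_mem_of_not_mem hk hb).symm
  refine Equiv.ext fun i => ?_
  rw [cycPerm_apply, Perm.mul_apply, cycPerm_apply]
  by_cases hip : i = p
  · subst hip
    rw [swap_apply_left, if_neg hb, if_pos (mem_insert_of_mem hp)]
    refine cycSucc_eq (mem_insert_self b T) hpb fun k hk hik => ?_
    rcases mem_insert.mp hk with rfl | hk
    · exact le_rfl
    · exact (habove k hk hik).le
  by_cases hib : i = b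
  · subst hib
    rw [swap_apply_right, if_pos hp, if_pos (mem_insert_self i T), cycSucc_insert (by simp)]
    have hfilter : T.filter (i < ·) = T.filter (p < ·) :=
      filter_congr fun k hk => ⟨hpb.trans, habove k hk⟩
    unfold cycSucc
    rw [hfilter]
  rw [swap_apply_of_ne_of_ne hip hib]
  by_cases hiT : i ∈ T
  · rw [if_pos (mem_insert_of_mem hiT), if_pos hiT]
    refine cycSucc_insert fun ⟨hib', hmin⟩ => ?_
    have hip' : i < p := lt_of_le_of_ne (hmax i hiT hib') hip
    exact (hmin p hp hip').not_gt hpb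
  · rw [if_neg hiT, if_neg (by simp [hib, hiT])]

theorem eqOn_cycSucc {f : Fin (N + 1) → Fin (N + 1)} (h0 : 0 ∈ T) (hmaps : ∀ t ∈ T, f t ∈ T)
    (hinj : Set.InjOn f T) (hf : ∀ t ∈ T, f t = 0 ∨ t < f t) : ∀ t ∈ T, f t = cycSucc T t := by
  by_contra! hbad
  -- look at the largest counterexample `t`
  set B := T.filter fun t => f t ≠ cycSucc T t
  have hB : B.Nonempty := by simpa [B, Finset.Nonempty] using hbad
  obtain ⟨htT, hne⟩ := mem_filter.mp (B.max'_mem hB)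
  set t := B.max' hB
  have hgood : ∀ s ∈ T, t < s → f s = cycSucc T s := fun s hs hts => by
    by_contra h
    exact (B.le_max' s (mem_filter.mpr ⟨hs, h⟩)).not_gt hts
  rcases hf t htT with hzero | hlt
  · obtain ⟨M, hM, hMmax⟩ : ∃ M ∈ T, ∀ k ∈ T, k ≤ M := ⟨T.max' ⟨0, h0⟩, T.max'_mem _, T.le_max'⟩
    have htM : t < M := by
      rcases cycSucc_eq_zero_or_lt T t with h | h
      · exact absurd (hzero.trans h.symm) hne
      · exact h.trans_le (hMmax _ (cycSucc_mem h0 t))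
    have hfM : f M = f t := by rw [hgood M hM htM, cycSucc_eq_zero hMmax, hzero]
    exact htM.ne' (hinj hM htT hfM)
  · have hc_lt : cycSucc T t < f t := lt_of_le_of_ne (cycSucc_le (hmaps t htT) hlt) (Ne.symm hne)
    obtain ⟨s, hs, hsf⟩ := exists_cycSucc_eq h0 (hmaps t htT)
    have hts : t < s := by
      rcases lt_trichotomy t s with h | rfl | h
      · exact h
      · exact absurd hsf.symm hne
      · exact absurd hsf
          ((cycSucc_le htT h).trans_lt ((lt_cycSucc (hmaps t htT) hlt).trans hc_lt)).ne
    exact hts.ne' (hinj hs htT (by rw [hgood s hs hts, hsf]))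

end CycSucc

theorem Fin.lt_neg_comm_of_ne_zero {n : ℕ} {a b : Fin (n + 1)} (ha : a ≠ 0) (hb : b ≠ 0) :
    a < -b ↔ b < -a := by
  rw [Fin.lt_def, Fin.lt_def, Fin.val_neg, Fin.val_neg, if_neg ha, if_neg hb]
  have := Fin.pos_iff_ne_zero.mpr ha
  have := Fin.pos_iff_ne_zero.mpr hb
  omega

section NegCycle

variable {n : ℕ} {A : Finset (Fin n)} {i : Fin (n + 1)}

def cycleSet (A : Finset (Fin n)) : Finset (Fin (n + 1)) :=
  insert 0 (A.map (Fin.succEmb n))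

theorem zero_mem_cycleSet (A : Finset (Fin n)) : 0 ∈ cycleSet A :=
  mem_insert_self _ _

theorem succ_mem_cycleSet {a : Fin n} : a.succ ∈ cycleSet A ↔ a ∈ A := by
  simp [cycleSet, Fin.succ_ne_zero]

theorem cycleSet_insert (b : Fin n) (A : Finset (Fin n)) :
    cycleSet (insert b A) = insert b.succ (cycleSet A) := by
  simp only [cycleSet, map_insert, Fin.coe_succEmb, insert_comm]

/-- In one-line notation `x = (0, n, …, 1)` is `Equiv.neg`; `negCycle A` is `x` composed with the
cycle `(0 a₁+1 … aₖ+1)` through the elements of `A = {a₁ < … < aₖ}`. -/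
noncomputable def negCycle (A : Finset (Fin n)) : Perm (Fin (n + 1)) :=
  Equiv.neg _ * cycPerm (cycleSet A) (zero_mem_cycleSet A)

theorem negCycle_apply_of_mem (hi : i ∈ cycleSet A) :
    negCycle A i = -cycSucc (cycleSet A) i := by
  simp [negCycle, cycPerm_apply, hi]

theorem negCycle_apply_of_notMem (hi : i ∉ cycleSet A) : negCycle A i = -i := by
  simp [negCycle, cycPerm_apply, hi]

theorem negCycle_lt_neg (hi : i ∈ cycleSet A) (hi0 : i ≠ 0) : negCycle A i < -i := by
  rw [negCycle_apply_of_mem hi]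
  rcases cycSucc_eq_zero_or_lt (cycleSet A) i with h | h
  · rw [h, neg_zero, Fin.pos_iff_ne_zero]
    exact neg_ne_zero.mpr hi0
  · have hc0 : cycSucc (cycleSet A) i ≠ 0 := (Fin.zero_le i |>.trans_lt h).ne'
    rwa [Fin.lt_neg_comm_of_ne_zero (neg_ne_zero.mpr hc0) hi0, neg_neg]

theorem negCycle_succ_lt_neg_iff {a : Fin n} : negCycle A a.succ < -a.succ ↔ a ∈ A := by
  refine ⟨fun h => ?_, fun ha => negCycle_lt_neg (succ_mem_cycleSet.mpr ha) (Fin.succ_ne_zero a)⟩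
  by_contra ha
  rw [negCycle_apply_of_notMem (mt succ_mem_cycleSet.mp ha)] at h
  exact lt_irrefl _ h

def BelowNeg (z : Perm (Fin (n + 1))) : Prop :=
  ∀ i, i ≠ 0 → z i ≤ -i

theorem belowNeg_negCycle (A : Finset (Fin n)) : BelowNeg (negCycle A) := fun i hi0 => by
  by_cases hi : i ∈ cycleSet A
  · exact (negCycle_lt_neg hi hi0).le
  · exact (negCycle_apply_of_notMem hi).le

def belowSet (z : Perm (Fin (n + 1))) : Finset (Fin n) :=
  univ.filter fun a => z a.succ < -a.succ

theorem belowSet_negCycle (A : Finset (Fin n)) : belowSet (negCycle A) = A := by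
  ext a
  simp [belowSet, negCycle_succ_lt_neg_iff]

theorem negCycle_belowSet {z : Perm (Fin (n + 1))} (hz : BelowNeg z) :
    negCycle (belowSet z) = z := by
  set T := cycleSet (belowSet z)
  have hout : ∀ j ∉ T, z j = -j := fun j hj => by
    have hj0 : j ≠ 0 := by
      rintro rfl
      exact hj (zero_mem_cycleSet _)
    obtain ⟨a, rfl⟩ := Fin.exists_succ_eq_of_ne_zero hj0
    have hle : ¬z a.succ < -a.succ := by simpa [T, succ_mem_cycleSet, belowSet] using hj
    exact (hz _ (Fin.succ_ne_zero a)).antisymm (not_lt.mp hle)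
  have hin : ∀ j ∈ T, j ≠ 0 → z j < -j := fun j hj hj0 => by
    obtain ⟨a, rfl⟩ := Fin.exists_succ_eq_of_ne_zero hj0
    simpa [T, succ_mem_cycleSet, belowSet] using hj
  have hcyc : ∀ t ∈ T, -z t = cycSucc T t := by
    refine eqOn_cycSucc (zero_mem_cycleSet _) (fun t ht => ?_)
      (fun s _ t _ h => z.injective (neg_injective h)) (fun t ht => ?_)
    · by_contra hnot
      have hzz := hout _ hnot
      rw [neg_neg] at hzz
      exact hnot (by rwa [z.injective hzz])
    · by_cases hz0 : z t = 0
      · exact .inl (by rw [hz0, neg_zero])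
      by_cases ht0 : t = 0
      · subst ht0
        exact .inr (Fin.pos_iff_ne_zero.mpr (neg_ne_zero.mpr hz0))
      · exact .inr ((Fin.lt_neg_comm_of_ne_zero hz0 ht0).mp (hin t ht ht0))
  refine Equiv.ext fun i => ?_
  by_cases hi : i ∈ T
  · rw [negCycle_apply_of_mem hi, ← hcyc i hi, neg_neg]
  · rw [negCycle_apply_of_notMem hi, hout i hi]

theorem BelowNeg.mul_swap {u : Perm (Fin (n + 1))} (hu : BelowNeg u) {p q : Fin (n + 1)}
    (hpq : p < q) (hpu : u p < u q) :
    BelowNeg (u * swap p q) ∧ ∀ i, u i < -i → (u * swap p q) i < -i := by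
  have hq0 : q ≠ 0 := (Fin.zero_le p |>.trans_lt hpq).ne'
  have hstrict : ∀ i, i ≠ 0 → (i = p ∨ i = q) → (u * swap p q) i < -i := by
    rintro i hi0 (rfl | rfl)
    · rw [Perm.mul_apply, swap_apply_left]
      calc u q ≤ -q := hu q hq0
        _ < -i := by rwa [Fin.lt_neg_comm_of_ne_zero (neg_ne_zero.mpr hq0) hi0, neg_neg]
    · rw [Perm.mul_apply, swap_apply_right]
      exact hpu.trans_le (hu i hi0)
  have hfix : ∀ i, ¬(i = p ∨ i = q) → (u * swap p q) i = u i := fun i h => by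
    rw [Perm.mul_apply, swap_apply_of_ne_of_ne (fun h' => h (.inl h')) (fun h' => h (.inr h'))]
  refine ⟨fun i hi0 => ?_, fun i hi => ?_⟩
  · by_cases h : i = p ∨ i = q
    · exact (hstrict i hi0 h).le
    · exact (hfix i h).trans_le (hu i hi0)
  · have hi0 : i ≠ 0 := by
      rintro rfl
      exact Fin.not_lt_zero _ (neg_zero (G := Fin (n + 1)) ▸ hi)
    by_cases h : i = p ∨ i = q
    · exact hstrict i hi0 h
    · rwa [hfix i h]

theorem BelowNeg.bruhatLE {u z : Perm (Fin (n + 1))} (hu : BelowNeg u) (h : BruhatLE u z) :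
    BelowNeg z ∧ ∀ i, u i < -i → z i < -i := by
  induction h with
  | refl => exact ⟨hu, fun _ => id⟩
  | tail _ hedge ih =>
    obtain ⟨p, q, hpq, hpu, rfl⟩ := exists_mul_swap_of_bruhat_edge hedge.1 hedge.2
    obtain ⟨hv, hmono⟩ := ih.1.mul_swap hpq hpu
    exact ⟨hv, fun i hi => hmono i (ih.2 i hi)⟩

theorem negCycle_insert_eq_mul_swap {b : Fin n} (hb : b ∉ A) {p : Fin (n + 1)}
    (hp : p ∈ cycleSet A) (hpb : p < b.succ) (hmax : ∀ k ∈ cycleSet A, k < b.succ → k ≤ p) :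
    negCycle (insert b A) = negCycle A * swap p b.succ := by
  rw [negCycle, negCycle, mul_assoc,
    ← cycPerm_insert (zero_mem_cycleSet A) (mt succ_mem_cycleSet.mp hb) hp hpb hmax]
  congr 1
  exact Equiv.ext fun i => by simp only [cycPerm_apply, cycleSet_insert]

theorem bruhatLE_negCycle_insert (b : Fin n) (A : Finset (Fin n)) :
    BruhatLE (negCycle A) (negCycle (insert b A)) := by
  by_cases hb : b ∈ A
  · rw [insert_eq_of_mem hb]
    exact .refl
  set T := cycleSet A
  have hbT : b.succ ∉ T := mt succ_mem_cycleSet.mp hb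
  have hbelow : (T.filter (· < b.succ)).Nonempty :=
    ⟨0, mem_filter.mpr ⟨zero_mem_cycleSet A, Fin.succ_pos b⟩⟩
  set p := (T.filter (· < b.succ)).max' hbelow
  obtain ⟨hpT, hpb⟩ := mem_filter.mp (max'_mem _ hbelow)
  have hmax : ∀ k ∈ T, k < b.succ → k ≤ p := fun k hk hkb =>
    le_max' _ k (mem_filter.mpr ⟨hk, hkb⟩)
  have hval : negCycle A p < negCycle A b.succ := by
    rw [negCycle_apply_of_mem hpT, negCycle_apply_of_notMem hbT]
    rcases cycSucc_eq_zero_or_lt T p with h | h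
    · rw [h, neg_zero, Fin.pos_iff_ne_zero, neg_ne_zero]
      exact Fin.succ_ne_zero b
    · have hcT := cycSucc_mem (zero_mem_cycleSet A) p
      have hbc : b.succ < cycSucc T p := lt_of_not_ge fun hcb =>
        (hmax _ hcT (hcb.lt_of_ne (ne_of_mem_of_not_mem hcT hbT))).not_gt h
      have hc0 : cycSucc T p ≠ 0 := (Fin.zero_le _ |>.trans_lt hbc).ne'
      rwa [Fin.lt_neg_comm_of_ne_zero (neg_ne_zero.mpr hc0) (Fin.succ_ne_zero b), neg_neg]
  rw [negCycle_insert_eq_mul_swap hb hpT hpb hmax]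
  exact bruhatLE_mul_swap_s7 _ hpb hval

theorem bruhatLE_negCycle_of_subset {A B : Finset (Fin n)} (h : A ⊆ B) :
    BruhatLE (negCycle A) (negCycle B) := by
  suffices hunion : ∀ C : Finset (Fin n), BruhatLE (negCycle A) (negCycle (A ∪ C)) by
    simpa [union_eq_right.mpr h] using hunion B
  intro C
  induction C using Finset.induction_on with
  | empty =>
    rw [union_empty]
    exact .refl
  | insert b C _ ih =>
    rw [union_insert]
    exact Relation.ReflTransGen.trans ih (bruhatLE_negCycle_insert b _)

theorem bruhatLE_negCycle_iff {A B : Finset (Fin n)} :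
    BruhatLE (negCycle A) (negCycle B) ↔ A ⊆ B := by
  refine ⟨fun h a ha => ?_, bruhatLE_negCycle_of_subset⟩
  rw [← negCycle_succ_lt_neg_iff] at ha ⊢
  exact ((belowNeg_negCycle A).bruhatLE h).2 _ ha

theorem negCycle_empty : negCycle (∅ : Finset (Fin n)) = Equiv.neg _ := by
  refine Equiv.ext fun i => ?_
  by_cases hi : i = 0
  · subst hi
    rw [negCycle_apply_of_mem (zero_mem_cycleSet _), cycSucc_eq_zero (by simp [cycleSet])]
    rfl
  · exact negCycle_apply_of_notMem (by simpa [cycleSet] using hi)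

theorem val_negCycle_univ_apply (i : Fin (n + 1)) :
    (negCycle (univ : Finset (Fin n)) i : ℕ) = n - i := by
  have hmem : ∀ j, j ∈ cycleSet (univ : Finset (Fin n)) := Fin.cases (zero_mem_cycleSet _)
    fun a => succ_mem_cycleSet.mpr (mem_univ a)
  rw [negCycle_apply_of_mem (hmem i)]
  by_cases hi : i = Fin.last n
  · rw [cycSucc_eq_zero fun j _ => hi ▸ Fin.le_last j, hi]
    simp
  · have hlt : i < i + 1 := Fin.lt_add_one_iff.mpr (lt_of_le_of_ne (Fin.le_last i) hi)
    rw [cycSucc_eq (hmem _) hlt fun k _ => Fin.add_one_le_of_lt, Fin.val_neg,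
      if_neg (Fin.zero_le i |>.trans_lt hlt).ne', Fin.val_add_one, if_neg hi]
    omega

end NegCycle

/-- for `x = (0, n, n-1, …, 2, 1) ∈ S_{n+1}` and `w₀` the longest element
(`w₀(i) = n - i`), the Bruhat interval `[x, w₀]` is isomorphic as a poset to the Boolean
lattice of subsets of an `n`-element set. -/
theorem interval_to_longest_is_boolean (n : ℕ) (x w₀ : Equiv.Perm (Fin (n + 1)))
    (hx0 : x 0 = 0) (hx : ∀ i : Fin (n + 1), i ≠ 0 → (x i : ℕ) = n + 1 - (i : ℕ))
    (hw₀ : ∀ i : Fin (n + 1), (w₀ i : ℕ) = n - (i : ℕ)) :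
    ∃ e : Finset (Fin n) ≃ {z : Equiv.Perm (Fin (n + 1)) // BruhatLE x z ∧ BruhatLE z w₀},
      ∀ A B : Finset (Fin n), A ⊆ B ↔ BruhatLE (e A : Equiv.Perm (Fin (n + 1))) (e B) := by
  have hx_eq : x = negCycle ∅ := by
    refine negCycle_empty ▸ Equiv.ext fun i => ?_
    by_cases hi : i = 0
    · rw [hi, hx0, Equiv.neg_apply, neg_zero]
    · exact Fin.ext (by rw [hx i hi, Equiv.neg_apply, Fin.val_neg, if_neg hi])
  have hw₀_eq : w₀ = negCycle univ :=
    Equiv.ext fun i => Fin.ext (by rw [hw₀, val_negCycle_univ_apply])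
  subst hx_eq hw₀_eq
  exact ⟨{ toFun A := ⟨negCycle A, bruhatLE_negCycle_of_subset (empty_subset A),
              bruhatLE_negCycle_of_subset (subset_univ A)⟩
           invFun z := belowSet z.1
           left_inv := belowSet_negCycle
           right_inv z :=
             Subtype.ext (negCycle_belowSet ((belowNeg_negCycle ∅).bruhatLE z.2.1).1) },
    fun _ _ => bruhatLE_negCycle_iff.symm⟩
end

section
/- The set L = {z ∈ [x,y] : z^{-1}(0) = x^{-1}(0)} is diamond complete in the Bruhat interval [x,y]: whenever a < b < d and a < b' < d with ℓ(b) = ℓ(b') = ℓ(a)+1 = ℓ(d)-1, all four being in [x,y] and all covering relations being Bruhat covers, if any two of the four edges {d→b, d→b', b→a, b'→a} sharing a vertex have both endpoints in L, then all of a, b, b', d lie in L. -/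
open Polynomial

/-- Bruhat cover relation: `u ⋖ v` iff `u ≤ v` and `ℓ(v) = ℓ(u) + 1`. -/
def BruhatCovBy {n : ℕ} (u v : Equiv.Perm (Fin n)) : Prop :=
  BruhatLE u v ∧ invCount v = invCount u + 1

lemma invCount_le_of_bruhatLE {n : ℕ} {u v : Equiv.Perm (Fin n)} (h : BruhatLE u v) :
    invCount u ≤ invCount v := by
  induction h with
  | refl => exact le_rfl
  | tail _ hstep ih => exact ih.trans hstep.2.le

lemma covby_step {n : ℕ} {u v : Equiv.Perm (Fin n)} (h : BruhatCovBy u v) :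
    ∃ i j : Fin n, i ≠ j ∧ v = Equiv.swap i j * u := by
  obtain ⟨hle, hlen⟩ := h
  rcases Relation.ReflTransGen.cases_head hle with heq | ⟨w, hstep, hrtg⟩
  · subst heq; omega
  · obtain ⟨⟨i, j, hij, hw⟩, hlt⟩ := hstep
    have hwv : invCount w ≤ invCount v := invCount_le_of_bruhatLE hrtg
    have : w = v := by
      rcases Relation.ReflTransGen.cases_head hrtg with heq | ⟨z, hstep', hrtg'⟩
      · exact heq
      · exfalso
        have := invCount_le_of_bruhatLE hrtg'
        have := hstep'.2
        omega
    exact ⟨i, j, hij, this ▸ hw⟩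

lemma swap_eq_swap_zero {n : ℕ} {i j k : Fin (n + 1)} (hij : i ≠ j)
    (hk : Equiv.swap i j 0 = k) (hk0 : k ≠ 0) : Equiv.swap i j = Equiv.swap 0 k := by
  rcases eq_or_ne i 0 with rfl | hi
  · rw [Equiv.swap_apply_left] at hk; subst hk; rfl
  · rcases eq_or_ne j 0 with rfl | hj
    · rw [Equiv.swap_apply_right] at hk; subst hk; exact Equiv.swap_comm _ _
    · rw [Equiv.swap_apply_of_ne_of_ne (Ne.symm hi) (Ne.symm hj)] at hk
      exact absurd hk.symm hk0

lemma swap_eq_of_apply_zero_eq {n : ℕ} {i j k l : Fin (n + 1)} (hij : i ≠ j) (hkl : k ≠ l)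
    (h : Equiv.swap i j 0 = Equiv.swap k l 0) (h0 : Equiv.swap i j 0 ≠ 0) :
    Equiv.swap i j = Equiv.swap k l := by
  rw [swap_eq_swap_zero hij rfl h0, swap_eq_swap_zero hkl h.symm (h ▸ h0), h]

lemma inv_apply_of_swap_mul {n : ℕ} {u v : Equiv.Perm (Fin n)} {i j : Fin n}
    (h : v = Equiv.swap i j * u) (z : Fin n) : v⁻¹ z = u⁻¹ (Equiv.swap i j z) := by
  subst h
  simp [mul_inv_rev, Equiv.Perm.mul_apply]

/-- the set `L = {z ∈ [x,y] : z⁻¹(0) = x⁻¹(0)}` is diamond complete: given a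
diamond `a ⋖ b ⋖ d`, `a ⋖ b' ⋖ d` with `b ≠ b'` inside `[x, y]`, if two of the four edges
sharing a vertex have all their endpoints in `L`, then all of `a, b, b', d` lie in `L`. -/
theorem coset_intersection_diamond_complete (n : ℕ)
    (x y a b b' d : Equiv.Perm (Fin (n + 1)))
    (ha : BruhatLE x a ∧ BruhatLE a y) (hb : BruhatLE x b ∧ BruhatLE b y)
    (hb' : BruhatLE x b' ∧ BruhatLE b' y) (hd : BruhatLE x d ∧ BruhatLE d y)
    (hab : BruhatCovBy a b) (hab' : BruhatCovBy a b')
    (hbd : BruhatCovBy b d) (hb'd : BruhatCovBy b' d)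
    (hbb' : b ≠ b')
    (L : Equiv.Perm (Fin (n + 1)) → Prop)
    (hL : ∀ z, L z ↔ z⁻¹ 0 = x⁻¹ 0)
    (htwo : (L d ∧ L b ∧ L b') ∨ (L d ∧ L b ∧ L a) ∨ (L d ∧ L b' ∧ L a) ∨
      (L b ∧ L a ∧ L b')) :
    L a ∧ L b ∧ L b' ∧ L d := by
  obtain ⟨i1, j1, h1, hd1⟩ := covby_step hbd
  obtain ⟨i2, j2, h2, hd2⟩ := covby_step hb'd
  obtain ⟨i3, j3, h3, hb3⟩ := covby_step hab
  obtain ⟨i4, j4, h4, hb4⟩ := covby_step hab'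
  -- group equation t1 * t3 = t2 * t4
  have hmul : Equiv.swap i1 j1 * Equiv.swap i3 j3 = Equiv.swap i2 j2 * Equiv.swap i4 j4 := by
    have h : Equiv.swap i1 j1 * Equiv.swap i3 j3 * a
        = Equiv.swap i2 j2 * Equiv.swap i4 j4 * a := by
      rw [mul_assoc, ← hb3, mul_assoc, ← hb4, ← hd1, ← hd2]
    exact mul_right_cancel h
  have hpt : ∀ z, Equiv.swap i1 j1 (Equiv.swap i3 j3 z)
      = Equiv.swap i2 j2 (Equiv.swap i4 j4 z) := by
    intro z
    simpa [Equiv.Perm.mul_apply] using Equiv.ext_iff.mp hmul z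
  have hmul' : Equiv.swap i3 j3 * Equiv.swap i1 j1 = Equiv.swap i4 j4 * Equiv.swap i2 j2 := by
    have := congrArg Inv.inv hmul
    simpa [mul_inv_rev, Equiv.swap_inv] using this
  have hpt' : ∀ z, Equiv.swap i3 j3 (Equiv.swap i1 j1 z)
      = Equiv.swap i4 j4 (Equiv.swap i2 j2 z) := by
    intro z
    simpa [Equiv.Perm.mul_apply] using Equiv.ext_iff.mp hmul' z
  -- non-equalities of transpositions
  have n12 : Equiv.swap i1 j1 ≠ Equiv.swap i2 j2 := by
    intro h
    exact hbb' (mul_left_cancel (a := Equiv.swap i1 j1) (by rw [← hd1, h, ← hd2]))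
  have n34 : Equiv.swap i3 j3 ≠ Equiv.swap i4 j4 := by
    intro h
    exact hbb' (by rw [hb3, hb4, h])
  have hda : invCount d = invCount a + 2 := by
    have := hab.2; have := hbd.2; omega
  have hda' : invCount d = invCount a + 2 := by
    have := hab'.2; have := hb'd.2; omega
  have n13 : Equiv.swap i1 j1 ≠ Equiv.swap i3 j3 := by
    intro h
    have hda2 : d = a := by
      rw [hd1, hb3, ← mul_assoc, h, Equiv.swap_mul_self, one_mul]
    rw [hda2] at hda; omega
  have n24 : Equiv.swap i2 j2 ≠ Equiv.swap i4 j4 := by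
    intro h
    have hda2 : d = a := by
      rw [hd2, hb4, ← mul_assoc, h, Equiv.swap_mul_self, one_mul]
    rw [hda2] at hda'; omega
  -- membership formulas
  have mb : b⁻¹ 0 = a⁻¹ (Equiv.swap i3 j3 0) := inv_apply_of_swap_mul hb3 0
  have mb' : b'⁻¹ 0 = a⁻¹ (Equiv.swap i4 j4 0) := inv_apply_of_swap_mul hb4 0
  have md : d⁻¹ 0 = a⁻¹ (Equiv.swap i3 j3 (Equiv.swap i1 j1 0)) := by
    rw [inv_apply_of_swap_mul hd1 0, inv_apply_of_swap_mul hb3]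
  have hinj : Function.Injective (a⁻¹ : Equiv.Perm (Fin (n + 1))) := Equiv.injective _
  rcases htwo with ⟨hLd, hLb, hLb'⟩ | ⟨hLd, hLb, hLa⟩ | ⟨hLd, hLb', hLa⟩ | ⟨hLb, hLa, hLb'⟩
  · -- L d, L b, L b' : show L a
    have eb : a⁻¹ (Equiv.swap i3 j3 0) = x⁻¹ 0 := mb ▸ (hL b).1 hLb
    have eb' : a⁻¹ (Equiv.swap i4 j4 0) = x⁻¹ 0 := mb' ▸ (hL b').1 hLb'
    have hpq : Equiv.swap i3 j3 0 = Equiv.swap i4 j4 0 := hinj (eb.trans eb'.symm)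
    have hp0 : Equiv.swap i3 j3 0 = 0 := by
      by_contra hne
      exact n34 (swap_eq_of_apply_zero_eq h3 h4 hpq hne)
    refine ⟨?_, hLb, hLb', hLd⟩
    rw [hL]
    rw [hp0] at eb
    exact eb
  · -- L d, L b, L a : show L b'
    have e0 : a⁻¹ 0 = x⁻¹ 0 := (hL a).1 hLa
    have ed : a⁻¹ (Equiv.swap i3 j3 (Equiv.swap i1 j1 0)) = x⁻¹ 0 := md ▸ (hL d).1 hLd
    have hr0 : Equiv.swap i3 j3 (Equiv.swap i1 j1 0) = 0 := hinj (ed.trans e0.symm)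
    have hr0' : Equiv.swap i4 j4 (Equiv.swap i2 j2 0) = 0 := (hpt' 0) ▸ hr0
    have h24 : Equiv.swap i2 j2 0 = Equiv.swap i4 j4 0 := by
      have := congrArg (Equiv.swap i4 j4) hr0'
      rwa [Equiv.swap_apply_self] at this
    have hq0 : Equiv.swap i4 j4 0 = 0 := by
      by_contra hne
      exact n24 (swap_eq_of_apply_zero_eq h2 h4 h24 (h24 ▸ hne))
    refine ⟨hLa, hLb, ?_, hLd⟩
    rw [hL, mb', hq0]
    exact e0
  · -- L d, L b', L a : show L b
    have e0 : a⁻¹ 0 = x⁻¹ 0 := (hL a).1 hLa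
    have ed : a⁻¹ (Equiv.swap i3 j3 (Equiv.swap i1 j1 0)) = x⁻¹ 0 := md ▸ (hL d).1 hLd
    have hr0 : Equiv.swap i3 j3 (Equiv.swap i1 j1 0) = 0 := hinj (ed.trans e0.symm)
    have h13 : Equiv.swap i1 j1 0 = Equiv.swap i3 j3 0 := by
      have := congrArg (Equiv.swap i3 j3) hr0
      rwa [Equiv.swap_apply_self] at this
    have hp0 : Equiv.swap i3 j3 0 = 0 := by
      by_contra hne
      exact n13 (swap_eq_of_apply_zero_eq h1 h3 h13 (h13 ▸ hne))
    refine ⟨hLa, ?_, hLb', hLd⟩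
    rw [hL, mb, hp0]
    exact e0
  · -- L b, L a, L b' : show L d
    have e0 : a⁻¹ 0 = x⁻¹ 0 := (hL a).1 hLa
    have eb : a⁻¹ (Equiv.swap i3 j3 0) = x⁻¹ 0 := mb ▸ (hL b).1 hLb
    have eb' : a⁻¹ (Equiv.swap i4 j4 0) = x⁻¹ 0 := mb' ▸ (hL b').1 hLb'
    have hp0 : Equiv.swap i3 j3 0 = 0 := hinj (eb.trans e0.symm)
    have hq0 : Equiv.swap i4 j4 0 = 0 := hinj (eb'.trans e0.symm)
    have h12 : Equiv.swap i1 j1 0 = Equiv.swap i2 j2 0 := by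
      have := hpt 0
      rwa [hp0, hq0] at this
    have ht10 : Equiv.swap i1 j1 0 = 0 := by
      by_contra hne
      exact n12 (swap_eq_of_apply_zero_eq h1 h2 h12 hne)
    refine ⟨hLa, hLb, hLb', ?_⟩
    rw [hL, md, ht10, hp0]
    exact e0
end

section
/- For a permutation matrix g ∈ GL_{n+1}, membership of a matrix h in the Bruhat cell BgB is equivalent to: rank(h^{≤(p,q)}) = rank(g^{≤(p,q)}) for all 0 ≤ p,q ≤ n, where h^{≤(p,q)} denotes the lower-left corner submatrix consisting of entries h_{ij} with i ≥ p and j ≤ q, and B is the group of invertible upper triangular matrices. -/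
/-- The permutation matrix of `u`: entry `(i, j)` is `1` iff `i = u j`. -/
def permMat {N : ℕ} (K : Type*) [Field K] (u : Equiv.Perm (Fin N)) :
    Matrix (Fin N) (Fin N) K :=
  fun i j => if u j = i then 1 else 0

/-- The rank of the lower-left corner submatrix `M^{≤(p,q)}` (entries `M i j` with
`i ≥ p` and `j ≤ q`). -/
noncomputable def cornerRank {N : ℕ} {K : Type*} [Field K]
    (M : Matrix (Fin N) (Fin N) K) (p q : Fin N) : ℕ :=
  (M.submatrix (fun i : {i : Fin N // p ≤ i} => (i : Fin N))
    (fun j : {j : Fin N // j ≤ q} => (j : Fin N))).rank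

/-!
Multiplying `h` on the left by an invertible upper triangular `b` multiplies the lower-left
corner `h^{≤(p,q)}` by the corresponding corner of `b`, which is again invertible upper
triangular; similarly on the right. So corner ranks are constant on Bruhat cells.

Conversely, Gaussian elimination column by column, taking the lowest nonzero entry of each
column as pivot and clearing its column by adding multiples of its row to the rows above and its
row by adding multiples of its column to the columns to the right, puts every invertible matrix
in the cell of a permutation matrix. The corner ranks of `permMat u` count
`#{j ≤ q | p ≤ u j}`, and these counts determine `u`. A matrix with the corner ranks of
`permMat u` has full rank, hence lies in the cell of a permutation with the same corner ranks
as `u`, that is, of `u` itself.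
-/

open Matrix Finset

theorem Finset.eq_of_forall_card_filter_le_eq {α : Type*} [LinearOrder α] {S T : Finset α}
    (h : ∀ q, #{x ∈ S | x ≤ q} = #{x ∈ T | x ≤ q}) : S = T := by
  by_contra hne
  obtain ⟨x, hx, hmin⟩ := (symmDiff S T).exists_min_image id (symmDiff_nonempty.2 hne)
  have hlt : {y ∈ S | y < x} = {y ∈ T | y < x} := by
    ext y
    simp only [mem_filter, and_congr_left_iff]
    intro hy
    by_contra hST
    exact (hmin y (mem_symmDiff.2 (by tauto))).not_gt hy
  have hcard (U : Finset α) :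
      #{y ∈ U | y ≤ x} = #{y ∈ U | y < x} + if x ∈ U then 1 else 0 := by
    have hsplit : {y ∈ U | y ≤ x} = {y ∈ U | y < x} ∪ {y ∈ U | y = x} := by
      ext y
      simp [le_iff_lt_or_eq, and_or_left]
    rw [hsplit, card_union_of_disjoint (disjoint_filter.2 fun y _ h₁ h₂ => h₁.ne h₂),
      filter_eq']
    split_ifs <;> simp
  have hx' := h x
  rw [hcard, hcard, hlt] at hx'
  rcases mem_symmDiff.1 hx with ⟨hS, hT⟩ | ⟨hT, hS⟩ <;> simp [hS, hT] at hx'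

theorem eq_of_forall_card_filter_le_and_le_eq {α β : Type*} [Fintype α] [LinearOrder α]
    [LinearOrder β] {f g : α → β}
    (h : ∀ p q, #{j | j ≤ q ∧ p ≤ f j} = #{j | j ≤ q ∧ p ≤ g j}) : f = g := by
  have hset (p : β) : univ.filter (p ≤ f ·) = univ.filter (p ≤ g ·) :=
    eq_of_forall_card_filter_le_eq fun q => by
      rw [filter_filter, filter_filter]
      simpa only [and_comm] using h p q
  funext j
  have h₁ := congrArg (j ∈ ·) (hset (f j))
  have h₂ := congrArg (j ∈ ·) (hset (g j))
  simp only [mem_filter, mem_univ, true_and, le_refl, eq_iff_iff, iff_true, true_iff] at h₁ h₂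
  exact le_antisymm h₁ h₂

theorem Matrix.isUnit_det_of_rank_eq_card {n K : Type*} [Fintype n] [DecidableEq n] [Field K]
    {A : Matrix n n K} (hA : A.rank = Fintype.card n) : IsUnit A.det := by
  rw [← isUnit_iff_isUnit_det, ← mulVec_surjective_iff_isUnit]
  have hrange : LinearMap.range A.mulVecLin = ⊤ :=
    Submodule.eq_top_of_finrank_eq (by rw [Module.finrank_fintype_fun_eq_card]; exact hA)
  exact LinearMap.range_eq_top.1 hrange

section Triangular

variable {ι κ κ' R : Type*} [Fintype ι] [LinearOrder ι] [NonUnitalNonAssocSemiring R]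
  {b : Matrix ι ι R}

theorem Matrix.IsUpperTriangular.submatrix_mul_rows_ge (hb : b.IsUpperTriangular)
    (M : Matrix ι κ R) (p : ι) (c : κ' → κ) :
    (b * M).submatrix (fun i : {i // p ≤ i} => (i : ι)) c =
      b.submatrix (fun i : {i // p ≤ i} => (i : ι)) (fun i : {i // p ≤ i} => (i : ι)) *
        M.submatrix (fun i : {i // p ≤ i} => (i : ι)) c := by
  ext i j
  rw [submatrix_apply, mul_apply, mul_apply, ← Fintype.sum_subtype_add_sum_subtype (p ≤ ·),
    Fintype.sum_eq_zero (fun k : {k // ¬ p ≤ k} => b i k * M k (c j)), add_zero]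
  · rfl
  · exact fun k => by rw [hb (lt_of_lt_of_le (not_le.1 k.2) i.2), zero_mul]

theorem Matrix.IsUpperTriangular.submatrix_mul_cols_le (hb : b.IsUpperTriangular)
    (M : Matrix κ ι R) (q : ι) (r : κ' → κ) :
    (M * b).submatrix r (fun j : {j // j ≤ q} => (j : ι)) =
      M.submatrix r (fun j : {j // j ≤ q} => (j : ι)) *
        b.submatrix (fun j : {j // j ≤ q} => (j : ι)) (fun j : {j // j ≤ q} => (j : ι)) := by
  ext i j
  rw [submatrix_apply, mul_apply, mul_apply, ← Fintype.sum_subtype_add_sum_subtype (· ≤ q),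
    Fintype.sum_eq_zero (fun k : {k // ¬ k ≤ q} => M (r i) k * b k j), add_zero]
  · rfl
  · exact fun k => by rw [hb (lt_of_le_of_lt j.2 (not_le.1 k.2)), mul_zero]

end Triangular

section Bruhat

variable {ι K : Type*} [Fintype ι] [LinearOrder ι] [Field K]

variable (ι K) in
def borelSubmonoid : Submonoid (Matrix ι ι K) where
  carrier := {b | b.IsUpperTriangular ∧ IsUnit b.det}
  mul_mem' ha hb := ⟨ha.1.mul hb.1, by rw [det_mul]; exact ha.2.mul hb.2⟩
  one_mem' := ⟨blockTriangular_one, by simp⟩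

variable {b g h M : Matrix ι ι K}

theorem mem_borelSubmonoid_iff :
    b ∈ borelSubmonoid ι K ↔ b.IsUpperTriangular ∧ ∀ i, b i i ≠ 0 := by
  refine and_congr_right fun hb => ?_
  rw [det_of_isUpperTriangular hb, isUnit_iff_ne_zero, prod_ne_zero_iff]
  simp

theorem submatrix_mem_borelSubmonoid {κ : Type*} [Fintype κ] [LinearOrder κ]
    (hb : b ∈ borelSubmonoid ι K) {f : κ → ι} (hf : StrictMono f) :
    b.submatrix f f ∈ borelSubmonoid κ K := by
  rw [mem_borelSubmonoid_iff] at hb ⊢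
  exact ⟨fun _ _ hij => hb.1 (hf hij), fun i => hb.2 (f i)⟩

theorem inv_mem_borelSubmonoid (hb : b ∈ borelSubmonoid ι K) : b⁻¹ ∈ borelSubmonoid ι K :=
  have := invertibleOfIsUnitDet b hb.2
  ⟨blockTriangular_inv_of_blockTriangular hb.1, isUnit_nonsing_inv_det b hb.2⟩

theorem one_add_mem_borelSubmonoid {N : Matrix ι ι K} (hN : ∀ a b, b ≤ a → N a b = 0) :
    1 + N ∈ borelSubmonoid ι K :=
  mem_borelSubmonoid_iff.2
    ⟨fun a b hba => by simp [one_apply_ne (ne_of_gt hba : a ≠ b), hN a b hba.le],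
      fun a => by simp [hN a a le_rfl]⟩

theorem diagonal_mem_borelSubmonoid {d : ι → K} (hd : ∀ i, d i ≠ 0) :
    diagonal d ∈ borelSubmonoid ι K :=
  mem_borelSubmonoid_iff.2 ⟨blockTriangular_diagonal d, by simpa using hd⟩

def bruhatCell (g : Matrix ι ι K) : Set (Matrix ι ι K) :=
  {h | ∃ b₁ ∈ borelSubmonoid ι K, ∃ b₂ ∈ borelSubmonoid ι K, h = b₁ * g * b₂}

theorem mem_bruhatCell_self : g ∈ bruhatCell g :=
  ⟨1, one_mem _, 1, one_mem _, by simp⟩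

theorem bruhatCell_trans (hM : M ∈ bruhatCell h) (hh : h ∈ bruhatCell g) :
    M ∈ bruhatCell g := by
  obtain ⟨b₁, hb₁, b₂, hb₂, rfl⟩ := hM
  obtain ⟨c₁, hc₁, c₂, hc₂, rfl⟩ := hh
  exact ⟨b₁ * c₁, mul_mem hb₁ hc₁, c₂ * b₂, mul_mem hc₂ hb₂, by simp only [Matrix.mul_assoc]⟩

theorem mem_bruhatCell_symm (hh : h ∈ bruhatCell g) : g ∈ bruhatCell h := by
  obtain ⟨b₁, hb₁, b₂, hb₂, rfl⟩ := hh
  refine ⟨b₁⁻¹, inv_mem_borelSubmonoid hb₁, b₂⁻¹, inv_mem_borelSubmonoid hb₂, ?_⟩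
  rw [Matrix.mul_assoc, Matrix.mul_assoc, mul_nonsing_inv _ hb₂.2, Matrix.mul_one,
    ← Matrix.mul_assoc, nonsing_inv_mul _ hb₁.2, Matrix.one_mul]

theorem isUnit_det_of_mem_bruhatCell (hg : IsUnit g.det) (hh : h ∈ bruhatCell g) :
    IsUnit h.det := by
  obtain ⟨b₁, hb₁, b₂, hb₂, rfl⟩ := hh
  simpa only [det_mul] using (hb₁.2.mul hg).mul hb₂.2

end Bruhat

section Pivot

variable {m n K : Type*}

section Zero

variable [Zero K]

def IsPivot (M : Matrix m n K) (i : m) (k : n) : Prop :=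
  M i k ≠ 0 ∧ (∀ i', i' ≠ i → M i' k = 0) ∧ ∀ l, l ≠ k → M i l = 0

theorem IsPivot.apply_eq_zero {M : Matrix m n K} {i i' : m} {j k : n} (hp : IsPivot M i k)
    (hj : M i' j ≠ 0) (hjk : j ≠ k) : M i' k = 0 := by
  by_contra hk
  obtain rfl : i' = i := by_contra fun hi => hk (hp.2.1 i' hi)
  exact hj (hp.2.2 j hjk)

theorem IsPivot.congr {M M' : Matrix m n K} {i : m} {k : n} (hp : IsPivot M i k)
    (hcol : ∀ a, M' a k = M a k) (hrow : ∀ b, M' i b = M i b) : IsPivot M' i k := by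
  simp only [IsPivot, hcol, hrow]
  exact hp

end Zero

variable [Field K] [DecidableEq m] [DecidableEq n]

/-- The Schur complement of the pivot `M i₀ j`, with the pivot itself put back. -/
def pivotReduce (M : Matrix m n K) (i₀ : m) (j : n) : Matrix m n K :=
  of fun a b =>
    if a = i₀ then (if b = j then M i₀ j else 0) else M a b - M a j * M i₀ b / M i₀ j

variable {M : Matrix m n K} {i₀ : m} {j : n}

theorem isPivot_pivotReduce (hc : M i₀ j ≠ 0) : IsPivot (pivotReduce M i₀ j) i₀ j :=
  ⟨by simpa [pivotReduce] using hc, fun a ha => by simp [pivotReduce, ha, hc],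
    fun b hb => by simp [pivotReduce, hb]⟩

theorem pivotReduce_col_eq_of_apply_eq_zero {k : n} (hk : M i₀ k = 0) (a : m) :
    pivotReduce M i₀ j a k = M a k := by
  by_cases ha : a = i₀
  · subst ha
    by_cases hkj : k = j <;> simp [pivotReduce, hkj, hk]
  · simp [pivotReduce, ha, hk]

theorem pivotReduce_row_eq_of_apply_eq_zero (hc : M i₀ j ≠ 0) {i : m} (hi : M i j = 0)
    (b : n) : pivotReduce M i₀ j i b = M i b := by
  have hii₀ : i ≠ i₀ := by rintro rfl; exact hc hi
  simp [pivotReduce, hii₀, hi]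

end Pivot

section Elimination

variable {ι K : Type*} [Fintype ι] [LinearOrder ι] [Field K] {M : Matrix ι ι K} {i₀ j : ι}

/-- Because the pivot is the lowest nonzero entry of its column and the leftmost one of its row,
`pivotReduce` only needs to add multiples of row `i₀` to the rows above it and multiples of
column `j` to the columns to its right: both are upper triangular operations. -/
theorem pivotReduce_mem_bruhatCell (hc : M i₀ j ≠ 0) (hbelow : ∀ i, i₀ < i → M i j = 0)
    (hleft : ∀ l, l < j → M i₀ l = 0) : pivotReduce M i₀ j ∈ bruhatCell M := by
  set v : ι → K := fun a => if a < i₀ then -(M a j / M i₀ j) else 0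
  set w : ι → K := fun b => if j < b then -(M i₀ b / M i₀ j) else 0
  have hL : 1 + vecMulVec v (Pi.single i₀ 1) ∈ borelSubmonoid ι K :=
    one_add_mem_borelSubmonoid fun a b hba => by
      by_cases hb : b = i₀
      · subst hb; simp [vecMulVec_apply, v, not_lt.2 hba]
      · simp [vecMulVec_apply, hb]
  have hR : 1 + vecMulVec (Pi.single j 1) w ∈ borelSubmonoid ι K :=
    one_add_mem_borelSubmonoid fun a b hba => by
      by_cases ha : a = j
      · subst ha; simp [vecMulVec_apply, w, not_lt.2 hba]
      · simp [vecMulVec_apply, ha]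
  refine ⟨_, hL, _, hR, ?_⟩
  rw [add_mul, Matrix.one_mul, vecMulVec_mul, single_one_vecMul, Matrix.mul_add, Matrix.mul_one,
    mul_vecMulVec, mulVec_single_one]
  have hcol (a : ι) : M a j + v a * M i₀ j = if a = i₀ then M i₀ j else 0 := by
    rcases lt_trichotomy a i₀ with ha | rfl | ha
    · simp [v, ha, ha.ne, div_mul_cancel₀ _ hc]
    · simp [v]
    · simp [v, not_lt.2 ha.le, ha.ne', hbelow a ha]
  ext a b
  simp only [pivotReduce, of_apply, Matrix.add_apply, vecMulVec_apply, col_apply, row_apply, hcol]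
  rcases eq_or_ne a i₀ with rfl | ha
  · rcases lt_trichotomy b j with hb | rfl | hb
    · simp [v, w, hb.ne, not_lt.2 hb.le, hleft b hb]
    · simp [v, w]
    · simp [v, w, hb.ne', hb, mul_div_cancel₀ _ hc]
  · rcases ha.lt_or_gt with ha' | ha'
    · simp [v, ha, ha']
      ring
    · simp [v, ha, not_lt.2 ha'.le, hbelow a ha']

theorem exists_mem_bruhatCell_isPivot_of_le (hM : IsUnit M.det) (j : ι)
    (hpiv : ∀ k < j, ∃ i, IsPivot M i k) :
    ∃ M' ∈ bruhatCell M, ∀ k ≤ j, ∃ i, IsPivot M' i k := by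
  obtain ⟨i₀, hc, hbelow⟩ : ∃ i₀, M i₀ j ≠ 0 ∧ ∀ i, i₀ < i → M i j = 0 := by
    have hne : {i | M i j ≠ 0}.Nonempty := by
      by_contra hempty
      refine hM.ne_zero (det_eq_zero_of_column_eq_zero j fun i => ?_)
      by_contra hi
      exact hempty ⟨i, hi⟩
    obtain ⟨i₀, hi₀, hmax⟩ := Set.exists_max_image _ id (Set.toFinite _) hne
    exact ⟨i₀, hi₀, fun i hi => by_contra fun hij => (hmax i hij).not_gt hi⟩
  have hleft : ∀ l < j, M i₀ l = 0 := fun l hl =>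
    (hpiv l hl).elim fun _ hp => hp.apply_eq_zero hc hl.ne'
  refine ⟨pivotReduce M i₀ j, pivotReduce_mem_bruhatCell hc hbelow hleft, fun k hk => ?_⟩
  rcases hk.lt_or_eq with hk | rfl
  · obtain ⟨i, hp⟩ := hpiv k hk
    exact ⟨i, hp.congr (pivotReduce_col_eq_of_apply_eq_zero (hleft k hk))
      (pivotReduce_row_eq_of_apply_eq_zero hc (hp.2.2 j hk.ne'))⟩
  · exact ⟨i₀, isPivot_pivotReduce hc⟩

end Elimination

section Permutation

variable {N : ℕ} {K : Type*} [Field K]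

theorem exists_mem_bruhatCell_forall_isPivot {h : Matrix (Fin N) (Fin N) K}
    (hh : IsUnit h.det) : ∃ M ∈ bruhatCell h, ∀ k, ∃ i, IsPivot M i k := by
  suffices ∀ j ≤ N, ∃ M ∈ bruhatCell h, ∀ k : Fin N, (k : ℕ) < j → ∃ i, IsPivot M i k by
    simpa using this N le_rfl
  intro j hj
  induction j with
  | zero => exact ⟨h, mem_bruhatCell_self, by simp⟩
  | succ j ih =>
    obtain ⟨M, hM, hpiv⟩ := ih (by omega)
    obtain ⟨M', hM', hpiv'⟩ := exists_mem_bruhatCell_isPivot_of_le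
      (isUnit_det_of_mem_bruhatCell hh hM) ⟨j, hj⟩ fun k hk => hpiv k hk
    exact ⟨M', bruhatCell_trans hM' hM, fun k hk => hpiv' k (show (k : ℕ) ≤ j by omega)⟩

/-- A matrix with a pivot in every column is a permutation matrix times an invertible
diagonal matrix. -/
theorem exists_permMat_mem_bruhatCell_of_isPivot {M : Matrix (Fin N) (Fin N) K}
    (hM : ∀ k, ∃ i, IsPivot M i k) : ∃ u, permMat K u ∈ bruhatCell M := by
  choose σ hσ using hM
  have hσinj : σ.Injective := fun k k' hkk' => by_contra fun hne =>
    (hσ k').1 (hkk' ▸ (hσ k).2.2 k' (Ne.symm hne))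
  refine ⟨Equiv.ofBijective σ hσinj.bijective_of_finite, 1, one_mem _,
    diagonal fun k => (M (σ k) k)⁻¹,
    diagonal_mem_borelSubmonoid fun k => inv_ne_zero (hσ k).1, ?_⟩
  ext i k
  simp only [permMat, Equiv.ofBijective_apply, Matrix.one_mul, mul_diagonal]
  split_ifs with hik
  · subst hik
    exact (mul_inv_cancel₀ (hσ k).1).symm
  · rw [(hσ k).2.1 i (Ne.symm hik), zero_mul]

theorem exists_mem_bruhatCell_permMat {h : Matrix (Fin N) (Fin N) K} (hh : IsUnit h.det) :
    ∃ u, h ∈ bruhatCell (permMat K u) := by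
  obtain ⟨M, hM, hpiv⟩ := exists_mem_bruhatCell_forall_isPivot hh
  obtain ⟨u, hu⟩ := exists_permMat_mem_bruhatCell_of_isPivot hpiv
  exact ⟨u, mem_bruhatCell_symm (bruhatCell_trans hu hM)⟩

end Permutation

section CornerRank

variable {N : ℕ} {K : Type*} [Field K]

theorem cornerRank_eq_of_mem_bruhatCell {g h : Matrix (Fin N) (Fin N) K}
    (hh : h ∈ bruhatCell g) (p q : Fin N) : cornerRank h p q = cornerRank g p q := by
  obtain ⟨b₁, hb₁, b₂, hb₂, rfl⟩ := hh
  rw [cornerRank, cornerRank, IsUpperTriangular.submatrix_mul_cols_le hb₂.1,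
    IsUpperTriangular.submatrix_mul_rows_ge hb₁.1,
    rank_mul_eq_left_of_isUnit_det _ _
      (submatrix_mem_borelSubmonoid hb₂ (Subtype.strictMono_coe _)).2,
    rank_mul_eq_right_of_isUnit_det _ _
      (submatrix_mem_borelSubmonoid hb₁ (Subtype.strictMono_coe _)).2]

theorem cornerRank_permMat (u : Equiv.Perm (Fin N)) (p q : Fin N) :
    cornerRank (permMat K u) p q = #{j | j ≤ q ∧ p ≤ u j} := by
  classical
  set A := (permMat K u).submatrix (fun i : {i // p ≤ i} => (i : Fin N))
    (fun j : {j // j ≤ q} => (j : Fin N))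
  set d : {j // j ≤ q} → K := fun j => if p ≤ u j then 1 else 0
  have hAd : A * diagonal d = A := by
    ext i j
    by_cases h : p ≤ u j <;> simp [A, d, permMat, h]
    exact fun he => h (he ▸ i.2)
  have hAA : Aᵀ * A = diagonal d := by
    ext j l
    simp only [A, d, permMat, mul_apply, transpose_apply, submatrix_apply, diagonal_apply,
      mul_ite, mul_one, mul_zero]
    by_cases hl : p ≤ u l
    · rw [Fintype.sum_eq_single ⟨u l, hl⟩ fun i hi => if_neg fun h => hi (Subtype.ext h.symm)]
      by_cases hjl : j = l
      · simp [hjl, hl]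
      · simp [hjl, Subtype.val_injective.ne hjl]
    · rw [Fintype.sum_eq_zero _ fun (i : {i // p ≤ i}) =>
        if_neg fun (h : u l = i) => hl (h ▸ i.2)]
      by_cases hjl : j = l
      · simp [hjl, hl]
      · simp [hjl]
  have hrank : A.rank = (diagonal d).rank :=
    le_antisymm (hAd ▸ rank_mul_le_right _ _) (hAA ▸ rank_mul_le_right _ _)
  rw [cornerRank, hrank, rank_diagonal, ← Fintype.card_subtype]
  exact Fintype.card_congr ((Equiv.subtypeEquivRight fun j => by simp [d]).trans
    (Equiv.subtypeSubtypeEquivSubtypeInter _ _))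

theorem cornerRank_zero_last {n : ℕ} (A : Matrix (Fin (n + 1)) (Fin (n + 1)) K) :
    cornerRank A 0 (Fin.last n) = A.rank :=
  rank_submatrix A (Equiv.subtypeUnivEquiv Fin.zero_le) (Equiv.subtypeUnivEquiv Fin.le_last)

end CornerRank

/-- for a permutation matrix `g` of `u ∈ S_{n+1}`, a matrix `h` lies in the
Bruhat cell `B g B` (with `B` the invertible upper triangular matrices) iff all the
lower-left corner ranks of `h` equal those of `g`. -/
theorem bruhat_cell_iff_corner_ranks (n : ℕ) (u : Equiv.Perm (Fin (n + 1)))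
    (h : Matrix (Fin (n + 1)) (Fin (n + 1)) ℂ) :
    (∃ b₁ b₂ : Matrix (Fin (n + 1)) (Fin (n + 1)) ℂ,
        IsUnit b₁.det ∧ IsUnit b₂.det ∧
        b₁.BlockTriangular id ∧ b₂.BlockTriangular id ∧
        h = b₁ * permMat ℂ u * b₂) ↔
      ∀ p q : Fin (n + 1), cornerRank h p q = cornerRank (permMat ℂ u) p q := by
  constructor
  · rintro ⟨b₁, b₂, hd₁, hd₂, ht₁, ht₂, rfl⟩
    exact cornerRank_eq_of_mem_bruhatCell ⟨b₁, ⟨ht₁, hd₁⟩, b₂, ⟨ht₂, hd₂⟩, rfl⟩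
  · intro hcr
    have hh : IsUnit h.det := by
      refine isUnit_det_of_rank_eq_card ?_
      rw [← cornerRank_zero_last, hcr, cornerRank_permMat]
      simp [Fin.le_last]
    obtain ⟨v, hv⟩ := exists_mem_bruhatCell_permMat hh
    obtain rfl : v = u := by
      refine Equiv.ext (congrFun (eq_of_forall_card_filter_le_and_le_eq fun p q => ?_))
      rw [← cornerRank_permMat (K := ℂ), ← cornerRank_permMat (K := ℂ),
        ← cornerRank_eq_of_mem_bruhatCell hv, hcr]
    obtain ⟨b₁, hb₁, b₂, hb₂, rfl⟩ := hv
    exact ⟨b₁, b₂, hb₁.2, hb₂.2, hb₁.1, hb₂.1, rfl⟩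
end

section
/- Let x ∈ S_{n+1}, m = x^{-1}(0), and let I be any subsequence of (x(m+1),...,x(n)) with greedy decreasing subsequence I_decr and associated cycle σ_I. Then for any p, the condition 'every element of I that is ≥ p occurs among x(0),...,x(q)' holds if and only if 'every element of I_decr that is ≥ p occurs among x(0),...,x(q)', for all q ≥ m. -/
open Polynomial

/-!
Every `a ∈ I` is dominated, in value and in position, by an entry of `I_decr`: walk along
`I_decr` from its head `max I ≥ a`; as long as `a` lies to the right of the current entry, `a`
is a candidate for the next greedy choice, so that choice exists and is still `≥ a`. The walk
stops at an entry `b ≥ a` with `x⁻¹ a ≤ x⁻¹ b`, and then `b` occurring among `x(0), …, x(q)`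
forces `a` to occur there too.
-/

section GreedyDecreasing

variable {α β : Type*} [LinearOrder α] [LinearOrder β] {pos : α → β} {I : Finset α}
  {l : List α}

theorem exists_mem_dominating_of_le_get
    (hstep : ∀ (k : ℕ) (hk1 : k < l.length) (hk2 : k + 1 < l.length)
      (hS : (I.filter (fun a => pos (l.get ⟨k, hk1⟩) < pos a)).Nonempty),
      l.get ⟨k + 1, hk2⟩ = (I.filter (fun a => pos (l.get ⟨k, hk1⟩) < pos a)).max' hS)
    (hcont : ∀ (k : ℕ) (hk1 : k < l.length),
      (I.filter (fun a => pos (l.get ⟨k, hk1⟩) < pos a)).Nonempty → k + 1 < l.length)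
    {a : α} (ha : a ∈ I) (k : ℕ) (hk : k < l.length) (hak : a ≤ l.get ⟨k, hk⟩) :
    ∃ b ∈ l, a ≤ b ∧ pos a ≤ pos b := by
  by_cases hpos : pos a ≤ pos (l.get ⟨k, hk⟩)
  · exact ⟨_, l.get_mem _, hak, hpos⟩
  · have hcand : a ∈ I.filter (fun b => pos (l.get ⟨k, hk⟩) < pos b) :=
      Finset.mem_filter.2 ⟨ha, not_le.1 hpos⟩
    have hk' := hcont k hk ⟨a, hcand⟩
    refine exists_mem_dominating_of_le_get hstep hcont ha (k + 1) hk' ?_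
    rw [hstep k hk hk' ⟨a, hcand⟩]
    exact Finset.le_max' _ _ hcand
termination_by l.length - k

theorem exists_mem_dominating
    (hne : I.Nonempty → l ≠ [])
    (hhead : ∀ h : I.Nonempty, l.head? = some (I.max' h))
    (hstep : ∀ (k : ℕ) (hk1 : k < l.length) (hk2 : k + 1 < l.length)
      (hS : (I.filter (fun a => pos (l.get ⟨k, hk1⟩) < pos a)).Nonempty),
      l.get ⟨k + 1, hk2⟩ = (I.filter (fun a => pos (l.get ⟨k, hk1⟩) < pos a)).max' hS)
    (hcont : ∀ (k : ℕ) (hk1 : k < l.length),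
      (I.filter (fun a => pos (l.get ⟨k, hk1⟩) < pos a)).Nonempty → k + 1 < l.length)
    {a : α} (ha : a ∈ I) :
    ∃ b ∈ l, a ≤ b ∧ pos a ≤ pos b := by
  have hI : I.Nonempty := ⟨a, ha⟩
  have hl : 0 < l.length := List.length_pos_iff.2 (hne hI)
  have hhead_eq : l.get ⟨0, hl⟩ = I.max' hI := by
    have := hhead hI
    rwa [List.head?_eq_some_head (hne hI), Option.some_inj, ← List.get_mk_zero hl] at this
  refine exists_mem_dominating_of_le_get hstep hcont ha 0 hl ?_
  rw [hhead_eq]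
  exact Finset.le_max' _ _ ha

end GreedyDecreasing

theorem greedy_same_corner_conditions_general (n : ℕ) (x : Equiv.Perm (Fin (n + 1)))
    (m : Fin (n + 1))
    (I : Finset (Fin (n + 1)))
    (l : List (Fin (n + 1)))
    (hmem : ∀ a ∈ l, a ∈ I)
    (hne : I.Nonempty → l ≠ [])
    (hhead : ∀ h : I.Nonempty, l.head? = some (I.max' h))
    (hstep : ∀ (k : ℕ) (hk1 : k < l.length) (hk2 : k + 1 < l.length)
      (hS : (I.filter (fun a => x⁻¹ (l.get ⟨k, hk1⟩) < x⁻¹ a)).Nonempty),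
      l.get ⟨k + 1, hk2⟩ = (I.filter (fun a => x⁻¹ (l.get ⟨k, hk1⟩) < x⁻¹ a)).max' hS)
    (hcont : ∀ (k : ℕ) (hk1 : k < l.length),
      (I.filter (fun a => x⁻¹ (l.get ⟨k, hk1⟩) < x⁻¹ a)).Nonempty → k + 1 < l.length) :
    ∀ p q : Fin (n + 1), m ≤ q →
      ((∀ a ∈ I, p ≤ a → x⁻¹ a ≤ q) ↔ (∀ a ∈ l, p ≤ a → x⁻¹ a ≤ q)) := by
  intro p q _
  refine ⟨fun h a ha hpa => h a (hmem a ha) hpa, fun h a ha hpa => ?_⟩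
  obtain ⟨b, hb, hab, hpos⟩ := exists_mem_dominating hne hhead hstep hcont ha
  exact hpos.trans (h b hb (hpa.trans hab))

/-- with `I` a set of values occurring to the right of `m = x⁻¹(0)` in the
one-line notation of `x`, and `l = I_decr` the greedy decreasing subsequence of `I`, for
every `p` and every `q ≥ m`: every element of `I` that is `≥ p` occurs among
`x(0), …, x(q)` iff every element of `I_decr` that is `≥ p` occurs among `x(0), …, x(q)`. -/
theorem greedy_same_corner_conditions (n : ℕ) (x : Equiv.Perm (Fin (n + 1)))
    (m : Fin (n + 1)) (hm : x m = 0)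
    (I : Finset (Fin (n + 1))) (hI : ∀ a ∈ I, m < x⁻¹ a)
    (l : List (Fin (n + 1)))
    (hmem : ∀ a ∈ l, a ∈ I)
    (hempty : I = ∅ → l = [])
    (hne : I.Nonempty → l ≠ [])
    (hhead : ∀ h : I.Nonempty, l.head? = some (I.max' h))
    (hstep : ∀ (k : ℕ) (hk1 : k < l.length) (hk2 : k + 1 < l.length)
      (hS : (I.filter (fun a => x⁻¹ (l.get ⟨k, hk1⟩) < x⁻¹ a)).Nonempty),
      l.get ⟨k + 1, hk2⟩ = (I.filter (fun a => x⁻¹ (l.get ⟨k, hk1⟩) < x⁻¹ a)).max' hS)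
    (hcont : ∀ (k : ℕ) (hk1 : k < l.length),
      (I.filter (fun a => x⁻¹ (l.get ⟨k, hk1⟩) < x⁻¹ a)).Nonempty → k + 1 < l.length) :
    ∀ p q : Fin (n + 1), m ≤ q →
      ((∀ a ∈ I, p ≤ a → x⁻¹ a ≤ q) ↔ (∀ a ∈ l, p ≤ a → x⁻¹ a ≤ q)) :=
  greedy_same_corner_conditions_general n x m I l hmem hne hhead hstep hcont
end
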